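/- arXiv:2210.00564 — 9 statements merged into one kernel-verified Lean document; each statement's English description precedes it below -/
import Mathlib

section
/- Let (Ω, F, (F_n)_{n≥0}, P) be a filtered probability space and p ∈ (0,1). Let (X̂_n)_{n≥1} be real-valued random variables such that X̂_n is F_n-measurable and integrable for every n ≥ 1, set Ŝ_0 = 0 and Ŝ_n = X̂_1 + ⋯ + X̂_n. Assume E[X̂_1 | F_0] = 0 a.s. and, for every n ≥ 1, E[X̂_{n+1} | F_n] = (p/n)·Ŝ_n a.s. Then the process M defined by M_0 = 0 and M_n = a_n·Ŝ_n for n ≥ 1, where a_n := ∏_{k=1}^{n-1} k/(k+p) (so a_1 = 1), is a martingale with respect to the filtration (F_n). -/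
/-!
Since `E[X_{n+1} | 𝓕ₙ] = (p/n) Ŝₙ`, the partial sums satisfy `E[Ŝ_{n+1} | 𝓕ₙ] = (1 + p/n) Ŝₙ`,
so `aₙ Ŝₙ` is a martingale as soon as `a_{n+1} (1 + p/n) = aₙ`, which is exactly the recursion
`a_{n+1} = aₙ · n/(n+p)` behind the product formula. The case `n = 0` fits the same formula,
read with `p/0 = 0`, because `Ŝ₀ = 0` and `a₁ = a₀ = 1`.
-/

open MeasureTheory Finset

theorem prod_Icc_div_add_mul_one_add_div (p : ℝ) (n : ℕ) (hp : (n : ℝ) + p ≠ 0) :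
    (∏ k ∈ Icc 1 n, (k : ℝ) / (k + p)) * (1 + p / n) =
      ∏ k ∈ Icc 1 (n - 1), (k : ℝ) / (k + p) := by
  cases n with
  | zero => simp
  | succ n =>
    rw [Nat.add_sub_cancel, prod_Icc_succ_top (by omega), mul_assoc]
    convert mul_one _ using 2
    field_simp

section Martingale

variable {Ω E : Type*} [NormedAddCommGroup E] [NormedSpace ℝ E] [CompleteSpace E]
  {m₀ : MeasurableSpace Ω} {μ : Measure Ω}

theorem condExp_add_of_stronglyMeasurable_left {m : MeasurableSpace Ω} {f g : Ω → E}
    (hm : m ≤ m₀) [SigmaFinite (μ.trim hm)]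
    (hf : StronglyMeasurable[m] f) (hfi : Integrable f μ) (hgi : Integrable g μ) :
    μ[f + g | m] =ᵐ[μ] f + μ[g | m] := by
  simpa only [condExp_of_stronglyMeasurable hm hf hfi] using condExp_add hfi hgi m

theorem martingale_smul_of_condExp_succ [IsFiniteMeasure μ] {𝓕 : Filtration ℕ m₀}
    {S : ℕ → Ω → E} {a r : ℕ → ℝ} (hadp : StronglyAdapted 𝓕 S) (hint : ∀ n, Integrable (S n) μ)
    (hcond : ∀ n, μ[S (n + 1) | 𝓕 n] =ᵐ[μ] r n • S n) (hrec : ∀ n, a (n + 1) * r n = a n) :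
    Martingale (fun n => a n • S n) 𝓕 μ := by
  refine martingale_nat (fun n => (hadp n).const_smul (a n)) (fun n => (hint n).smul (a n))
    fun n => ?_
  filter_upwards [condExp_smul (a (n + 1)) (S (n + 1)) (𝓕 n), hcond n] with ω hsmul hgrowth
  simp only [hsmul, Pi.smul_apply, hgrowth, smul_smul, hrec]

end Martingale

theorem reinforced_walk_martingale_general
    {Ω : Type*} {m : MeasurableSpace Ω} {μ : Measure Ω} [IsProbabilityMeasure μ]
    (𝓕 : Filtration ℕ m) (p : ℝ) (hp0 : 0 < p)
    (X : ℕ → Ω → ℝ)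
    (hmeas : ∀ n, 1 ≤ n → StronglyMeasurable[𝓕 n] (X n))
    (hint : ∀ n, 1 ≤ n → Integrable (X n) μ)
    (S : ℕ → Ω → ℝ)
    (hS : ∀ n ω, S n ω = ∑ k ∈ Finset.Icc 1 n, X k ω)
    (h0 : μ[X 1 | 𝓕 0] =ᵐ[μ] 0)
    (hcond : ∀ n, 1 ≤ n → μ[X (n + 1) | 𝓕 n] =ᵐ[μ] fun ω => (p / n) * S n ω)
    (a : ℕ → ℝ)
    (ha : ∀ n, a n = ∏ k ∈ Finset.Icc 1 (n - 1), (k : ℝ) / ((k : ℝ) + p))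
    (M : ℕ → Ω → ℝ)
    (hM : ∀ n ω, M n ω = a n * S n ω) :
    Martingale M 𝓕 μ := by
  obtain rfl : M = fun n => a n • S n := funext₂ hM
  obtain rfl : a = fun n : ℕ => ∏ k ∈ Icc 1 (n - 1), (k : ℝ) / (k + p) := funext ha
  obtain rfl : S = fun n => ∑ k ∈ Icc 1 n, X k := funext₂ fun n ω => by simp [hS]
  have hadp : StronglyAdapted 𝓕 fun n => ∑ k ∈ Icc 1 n, X k := fun n =>
    stronglyMeasurable_sum _ fun k hk => (hmeas k (mem_Icc.1 hk).1).mono (𝓕.mono (mem_Icc.1 hk).2)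
  have hSint : ∀ n, Integrable (∑ k ∈ Icc 1 n, X k) μ := fun n =>
    integrable_finsetSum' _ fun k hk => hint k (mem_Icc.1 hk).1
  have hincr : ∀ n, μ[X (n + 1) | 𝓕 n] =ᵐ[μ] (p / n) • ∑ k ∈ Icc 1 n, X k := by
    rintro (_ | n)
    · simpa using h0
    · simpa [Pi.smul_def, Finset.sum_apply] using hcond (n + 1) (by omega)
  refine martingale_smul_of_condExp_succ hadp hSint (r := fun n => 1 + p / n) (fun n => ?_)
    fun n => by
      rw [Nat.add_sub_cancel]
      exact prod_Icc_div_add_mul_one_add_div p n (by positivity)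
  rw [sum_Icc_succ_top (by omega)]
  filter_upwards [condExp_add_of_stronglyMeasurable_left (𝓕.le n) (hadp n) (hSint n)
    (hint (n + 1) (by omega)), hincr n] with ω hsplit hstep
  simp only [hsplit, Pi.add_apply, hstep, Pi.smul_apply, smul_eq_mul]
  ring

/-- The martingale associated with a noise reinforced random walk:
if `E[X₁ | 𝓕₀] = 0` and `E[X_{n+1} | 𝓕ₙ] = (p/n) Ŝₙ` for all `n ≥ 1`,
then `Mₙ = aₙ Ŝₙ` with `aₙ = ∏_{k=1}^{n-1} k/(k+p)` is a martingale. -/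
theorem reinforced_walk_martingale
    {Ω : Type*} {m : MeasurableSpace Ω} {μ : Measure Ω} [IsProbabilityMeasure μ]
    (𝓕 : Filtration ℕ m) (p : ℝ) (hp0 : 0 < p) (hp1 : p < 1)
    (X : ℕ → Ω → ℝ)
    (hmeas : ∀ n, 1 ≤ n → StronglyMeasurable[𝓕 n] (X n))
    (hint : ∀ n, 1 ≤ n → Integrable (X n) μ)
    (S : ℕ → Ω → ℝ)
    (hS : ∀ n ω, S n ω = ∑ k ∈ Finset.Icc 1 n, X k ω)
    (h0 : μ[X 1 | 𝓕 0] =ᵐ[μ] 0)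
    (hcond : ∀ n, 1 ≤ n → μ[X (n + 1) | 𝓕 n] =ᵐ[μ] fun ω => (p / n) * S n ω)
    (a : ℕ → ℝ)
    (ha : ∀ n, a n = ∏ k ∈ Finset.Icc 1 (n - 1), (k : ℝ) / ((k : ℝ) + p))
    (M : ℕ → Ω → ℝ)
    (hM : ∀ n ω, M n ω = a n * S n ω) :
    Martingale M 𝓕 μ :=
  reinforced_walk_martingale_general 𝓕 p hp0 X hmeas hint S hS h0 hcond a ha M hM
end

section
/- Let (Ω, F, (F_n)_{n≥0}, P) be a filtered probability space and p ∈ (0,1). Let (X̂_n)_{n≥1} be square-integrable real random variables with X̂_n F_n-measurable, set Ŝ_0 = 0, Ŝ_n = X̂_1 + ⋯ + X̂_n and V̂_n = X̂_1² + ⋯ + X̂_n². Assume there is a constant σ² ≥ 0 with E[X̂_1 | F_0] = 0 a.s., E[X̂_1² | F_0] = σ² a.s., and for every n ≥ 1: E[X̂_{n+1} | F_n] = (p/n)·Ŝ_n a.s. and E[X̂_{n+1}² | F_n] = (1−p)σ² + (p/n)·V̂_n a.s. Let M_0 = 0 and M_n = a_n·Ŝ_n with a_n := ∏_{k=1}^{n-1}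 k/(k+p). Then almost surely, for every n ≥ 1, ∑_{k=1}^n E[(M_k − M_{k-1})² | F_{k-1}] = σ² + ∑_{k=2}^n a_k²·( (1−p)σ² − p²·Ŝ_{k-1}²/(k−1)² + p·V̂_{k-1}/(k−1) ), where the sum over k from 2 to n is empty (hence zero) when n = 1. -/
/-!
Because `aₙ₊₁ (n + p) = aₙ n` and `E[X̂ₙ₊₁ | ℱₙ] = (p / n) Ŝₙ`, the increment `Mₙ₊₁ - Mₙ` is
`aₙ₊₁ (X̂ₙ₊₁ - E[X̂ₙ₊₁ | ℱₙ])`. Its conditional second moment is therefore `aₙ₊₁²` times the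
conditional variance `E[X̂ₙ₊₁² | ℱₙ] - E[X̂ₙ₊₁ | ℱₙ]²`, into which the two moment identities are
substituted; the first increment is `X̂₁`, with conditional second moment `σ²`.
-/

open MeasureTheory ProbabilityTheory Finset

/-- The martingale normalisation `aₙ` of the reinforced walk. -/
noncomputable def reinforcementWeight (p : ℝ) (n : ℕ) : ℝ :=
  ∏ k ∈ Icc 1 (n - 1), (k : ℝ) / (k + p)

@[simp]
lemma reinforcementWeight_one (p : ℝ) : reinforcementWeight p 1 = 1 := by
  simp [reinforcementWeight]

lemma reinforcementWeight_succ_mul {p : ℝ} (hp : 0 ≤ p) {n : ℕ} (hn : n ≠ 0) :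
    reinforcementWeight p (n + 1) * (n + p) = reinforcementWeight p n * n := by
  obtain ⟨j, rfl⟩ := Nat.exists_eq_succ_of_ne_zero hn
  have : (j + 1 : ℝ) + p ≠ 0 := by positivity
  simp only [reinforcementWeight, Nat.succ_sub_one, prod_Icc_succ_top (Nat.le_add_left 1 j)]
  push_cast
  field_simp

lemma reinforcementWeight_succ_mul_add_sub {p : ℝ} (hp : 0 ≤ p) {n : ℕ} (hn : n ≠ 0) (s x : ℝ) :
    reinforcementWeight p (n + 1) * (s + x) - reinforcementWeight p n * s
      = reinforcementWeight p (n + 1) * (x - p / n * s) := by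
  have hrec := reinforcementWeight_succ_mul hp hn
  have : (n : ℝ) ≠ 0 := Nat.cast_ne_zero.2 hn
  field_simp
  linear_combination s * hrec

section CondExp

variable {Ω : Type*} {m m₀ : MeasurableSpace Ω} {μ : Measure[m₀] Ω}

lemma condExp_sq_smul_sub_condExp (c : ℝ) (X : Ω → ℝ) :
    μ[(c • (X - μ[X | m])) ^ 2 | m] =ᵐ[μ] c ^ 2 • Var[X; μ | m] := by
  rw [smul_pow]
  exact condExp_smul _ _ _

lemma condExp_sq_smul_sub_of_condExp_eq [IsFiniteMeasure μ] (hm : m ≤ m₀) {X Y : Ω → ℝ}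
    (hX : MemLp X 2 μ) (hXY : μ[X | m] =ᵐ[μ] Y) (c : ℝ) :
    μ[(c • (X - Y)) ^ 2 | m] =ᵐ[μ] c ^ 2 • (μ[X ^ 2 | m] - Y ^ 2) := by
  have hcentred : (c • (X - Y)) ^ 2 =ᵐ[μ] (c • (X - μ[X | m])) ^ 2 := by
    filter_upwards [hXY] with ω hω
    simp [hω]
  filter_upwards [condExp_congr_ae (m := m) hcentred,
    condExp_sq_smul_sub_condExp (m := m) (μ := μ) c X,
    condVar_ae_eq_condExp_sq_sub_sq_condExp hm hX, hXY] with ω h₁ h₂ h₃ h₄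
  simp [h₁, h₂, h₃, h₄]

lemma condExp_sq_reinforcementWeight_increment [IsFiniteMeasure μ] (hm : m ≤ m₀) {p : ℝ}
    (hp : 0 ≤ p) {n : ℕ} (hn : n ≠ 0) {S X : Ω → ℝ} (hX : MemLp X 2 μ)
    (hXS : μ[X | m] =ᵐ[μ] fun ω => p / n * S ω) :
    μ[fun ω => (reinforcementWeight p (n + 1) * (S ω + X ω) - reinforcementWeight p n * S ω) ^ 2
      | m] =ᵐ[μ] fun ω =>
        reinforcementWeight p (n + 1) ^ 2 * (μ[fun ω => X ω ^ 2 | m] ω - (p / n * S ω) ^ 2) := by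
  have hincrement : (fun ω =>
      (reinforcementWeight p (n + 1) * (S ω + X ω) - reinforcementWeight p n * S ω) ^ 2)
      = (reinforcementWeight p (n + 1) • (X - fun ω => p / n * S ω)) ^ 2 := by
    funext ω
    simp [reinforcementWeight_succ_mul_add_sub hp hn]
  rw [hincrement]
  exact condExp_sq_smul_sub_of_condExp_eq hm hX hXS _

end CondExp

theorem reinforced_walk_quadratic_variation_general
    {Ω : Type*} {m : MeasurableSpace Ω} {μ : Measure Ω} [IsProbabilityMeasure μ]
    (𝓕 : Filtration ℕ m) (p : ℝ) (hp0 : 0 < p)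
    (X : ℕ → Ω → ℝ)
    (hL2 : ∀ n, 1 ≤ n → MemLp (X n) 2 μ)
    (S V : ℕ → Ω → ℝ)
    (hS : ∀ n ω, S n ω = ∑ k ∈ Finset.Icc 1 n, X k ω)
    (σ2 : ℝ)
    (h0sq : μ[(fun ω => (X 1 ω) ^ 2) | 𝓕 0] =ᵐ[μ] fun _ => σ2)
    (hcond : ∀ n, 1 ≤ n → μ[X (n + 1) | 𝓕 n] =ᵐ[μ] fun ω => (p / n) * S n ω)
    (hcondsq : ∀ n, 1 ≤ n →
      μ[(fun ω => (X (n + 1) ω) ^ 2) | 𝓕 n] =ᵐ[μ]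
        fun ω => (1 - p) * σ2 + (p / n) * V n ω)
    (a : ℕ → ℝ)
    (ha : ∀ n, a n = ∏ k ∈ Finset.Icc 1 (n - 1), (k : ℝ) / ((k : ℝ) + p))
    (M : ℕ → Ω → ℝ)
    (hM : ∀ n ω, M n ω = a n * S n ω) :
    ∀ᵐ ω ∂μ, ∀ n, 1 ≤ n →
      ∑ k ∈ Finset.Icc 1 n, (μ[(fun ω' => (M k ω' - M (k - 1) ω') ^ 2) | 𝓕 (k - 1)]) ω
        = σ2 + ∑ k ∈ Finset.Icc 2 n,
            (a k) ^ 2 * ((1 - p) * σ2 - p ^ 2 * (S (k - 1) ω) ^ 2 / ((k : ℝ) - 1) ^ 2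
              + p * V (k - 1) ω / ((k : ℝ) - 1)) := by
  obtain rfl : a = reinforcementWeight p := funext ha
  have hS_succ (n : ℕ) (ω : Ω) : S (n + 1) ω = S n ω + X (n + 1) ω := by
    simp only [hS, sum_Icc_succ_top (Nat.le_add_left 1 n)]
  have hfirst : (fun ω => (M 1 ω - M 0 ω) ^ 2) = fun ω => X 1 ω ^ 2 := by
    funext ω
    simp [hM, hS]
  have hstep (n : ℕ) (hn : 1 ≤ n) : μ[fun ω => (M (n + 1) ω - M n ω) ^ 2 | 𝓕 n] =ᵐ[μ]
      fun ω => reinforcementWeight p (n + 1) ^ 2 * ((1 - p) * σ2 - p ^ 2 * S n ω ^ 2 / n ^ 2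
        + p * V n ω / n) := by
    simp only [hM, hS_succ]
    filter_upwards [condExp_sq_reinforcementWeight_increment (𝓕.le n) hp0.le (by omega)
      (hL2 (n + 1) (by omega)) (hcond n hn), hcondsq n hn] with ω h₁ h₂
    rw [h₁, h₂]
    ring
  filter_upwards [h0sq, ae_all_iff.2 fun n => Filter.eventually_imp_distrib_left.2 (hstep n)]
    with ω h₁ hsteps n hn
  rw [← add_sum_Ioc_eq_sum_Icc hn, ← Icc_add_one_left_eq_Ioc, Nat.sub_self, hfirst, h₁]
  congr 1
  refine sum_congr rfl fun k hk => ?_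
  obtain ⟨n, rfl⟩ : ∃ n, k = n + 1 := ⟨k - 1, by grind⟩
  rw [Nat.add_sub_cancel, hsteps n (by grind), Nat.cast_succ, add_sub_cancel_right]

/-- The predictable quadratic variation of the martingale `Mₙ = aₙ Ŝₙ` associated with a
noise reinforced random walk with memory parameter `p` and centred, square-integrable
typical step of variance `σ²`. -/
theorem reinforced_walk_quadratic_variation
    {Ω : Type*} {m : MeasurableSpace Ω} {μ : Measure Ω} [IsProbabilityMeasure μ]
    (𝓕 : Filtration ℕ m) (p : ℝ) (hp0 : 0 < p) (hp1 : p < 1)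
    (X : ℕ → Ω → ℝ)
    (hmeas : ∀ n, 1 ≤ n → StronglyMeasurable[𝓕 n] (X n))
    (hL2 : ∀ n, 1 ≤ n → MemLp (X n) 2 μ)
    (S V : ℕ → Ω → ℝ)
    (hS : ∀ n ω, S n ω = ∑ k ∈ Finset.Icc 1 n, X k ω)
    (hV : ∀ n ω, V n ω = ∑ k ∈ Finset.Icc 1 n, (X k ω) ^ 2)
    (σ2 : ℝ) (hσ2 : 0 ≤ σ2)
    (h0 : μ[X 1 | 𝓕 0] =ᵐ[μ] 0)
    (h0sq : μ[(fun ω => (X 1 ω) ^ 2) | 𝓕 0] =ᵐ[μ] fun _ => σ2)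
    (hcond : ∀ n, 1 ≤ n → μ[X (n + 1) | 𝓕 n] =ᵐ[μ] fun ω => (p / n) * S n ω)
    (hcondsq : ∀ n, 1 ≤ n →
      μ[(fun ω => (X (n + 1) ω) ^ 2) | 𝓕 n] =ᵐ[μ]
        fun ω => (1 - p) * σ2 + (p / n) * V n ω)
    (a : ℕ → ℝ)
    (ha : ∀ n, a n = ∏ k ∈ Finset.Icc 1 (n - 1), (k : ℝ) / ((k : ℝ) + p))
    (M : ℕ → Ω → ℝ)
    (hM : ∀ n ω, M n ω = a n * S n ω) :
    ∀ᵐ ω ∂μ, ∀ n, 1 ≤ n →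
      ∑ k ∈ Finset.Icc 1 n, (μ[(fun ω' => (M k ω' - M (k - 1) ω') ^ 2) | 𝓕 (k - 1)]) ω
        = σ2 + ∑ k ∈ Finset.Icc 2 n,
            (a k) ^ 2 * ((1 - p) * σ2 - p ^ 2 * (S (k - 1) ω) ^ 2 / ((k : ℝ) - 1) ^ 2
              + p * V (k - 1) ω / ((k : ℝ) - 1)) :=
  reinforced_walk_quadratic_variation_general 𝓕 p hp0 X hL2 S V hS σ2 h0sq hcond hcondsq a ha M hM
end

section
/- Let 0 < p < 1/2. The covariance function of noise reinforced Brownian motion is positive semidefinite: for every n ≥ 1, all times t_1, …, t_n ∈ [0,∞) and all real numbers c_1, …, c_n, one has ∑_{i=1}^n ∑_{j=1}^n c_i c_j · (max(t_i,t_j))^p · (min(t_i,t_j))^{1−p} / (1−2p) ≥ 0 (with the convention that the summand vanishes when min(t_i,t_j) = 0). -/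
/-!
Writing `q = 1 - 2p > 0`, the kernel factors as
`(s ∨ t)^p (s ∧ t)^{1-p} = s^p · min (s^q) (t^q) · t^p`.
The Brownian kernel `min u v` on `[0, ∞)` is positive semidefinite, being the Gram matrix of
the indicators of `[0, u]` in `L²`; conjugating by the diagonal matrix `diag (t_i^p)` and scaling
by `(1 - 2p)⁻¹ > 0` preserve this.
-/

theorem Real.min_rpow_of_nonneg {a b q : ℝ} (ha : 0 ≤ a) (hb : 0 ≤ b) (hq : 0 ≤ q) :
    min a b ^ q = min (a ^ q) (b ^ q) := by
  rcases le_total a b with hab | hab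
  · rw [min_eq_left hab, min_eq_left (Real.rpow_le_rpow ha hab hq)]
  · rw [min_eq_right hab, min_eq_right (Real.rpow_le_rpow hb hab hq)]

theorem Real.max_rpow_mul_min_rpow_add {a b : ℝ} (ha : 0 ≤ a) (hb : 0 ≤ b) {p q : ℝ}
    (hpq : p + q ≠ 0) : max a b ^ p * min a b ^ (p + q) = a ^ p * b ^ p * min a b ^ q := by
  rw [Real.rpow_add' (le_min ha hb) hpq, ← mul_assoc,
    ← Real.mul_rpow (le_max_of_le_left ha) (le_min ha hb), max_mul_min, Real.mul_rpow ha hb]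

theorem Matrix.posSemidef_min_of_nonneg {ι : Type*} [Finite ι] {u : ι → ℝ}
    (hu : ∀ i, 0 ≤ u i) : (Matrix.of fun i j => min (u i) (u j)).PosSemidef := by
  have hvol : ∀ i j, min (u i) (u j) =
      MeasureTheory.volume.real (Set.Icc 0 (u i) ∩ Set.Icc 0 (u j)) := by
    intro i j
    simp [Set.Icc_inter_Icc, hu i, hu j]
  simp_rw [hvol]
  exact MeasureTheory.posSemidef_matrix_measure_inter (fun _ => measurableSet_Icc)
    (fun _ => measure_Icc_lt_top.ne)

noncomputable def nrbmCovariance (p s t : ℝ) : ℝ :=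
  max s t ^ p * min s t ^ (1 - p) / (1 - 2 * p)

theorem nrbmCovariance_eq_mul_min_rpow {p s t : ℝ} (hs : 0 ≤ s) (ht : 0 ≤ t) (hp : p < 1 / 2) :
    nrbmCovariance p s t =
      (1 - 2 * p)⁻¹ * (s ^ p * min (s ^ (1 - 2 * p)) (t ^ (1 - 2 * p)) * t ^ p) := by
  rw [nrbmCovariance, show 1 - p = p + (1 - 2 * p) by ring,
    Real.max_rpow_mul_min_rpow_add hs ht (by linarith),
    Real.min_rpow_of_nonneg hs ht (by linarith)]
  ring

theorem posSemidef_nrbmCovariance {ι : Type*} [Fintype ι] [DecidableEq ι] {p : ℝ}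
    (hp : p < 1 / 2) {t : ι → ℝ} (ht : ∀ i, 0 ≤ t i) :
    (Matrix.of fun i j => nrbmCovariance p (t i) (t j)).PosSemidef := by
  have hq : 0 ≤ 1 - 2 * p := by linarith
  have hmin : (Matrix.of fun i j => min (t i ^ (1 - 2 * p)) (t j ^ (1 - 2 * p))).PosSemidef :=
    Matrix.posSemidef_min_of_nonneg fun i => Real.rpow_nonneg (ht i) _
  convert (hmin.mul_mul_conjTranspose_same (Matrix.diagonal fun i => t i ^ p)).smul
    (inv_nonneg.2 hq) using 1
  ext i j
  simp [Matrix.diagonal_mul, Matrix.mul_diagonal, nrbmCovariance_eq_mul_min_rpow (ht i) (ht j) hp]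

theorem nrbm_covariance_posSemidef_general (p : ℝ) (hp2 : p < 1 / 2)
    (n : ℕ) (t : Fin n → ℝ) (ht : ∀ i, 0 ≤ t i) (c : Fin n → ℝ) :
    0 ≤ ∑ i, ∑ j, c i * c j *
      ((max (t i) (t j)) ^ p * (min (t i) (t j)) ^ (1 - p) / (1 - 2 * p)) := by
  have hquad := (posSemidef_nrbmCovariance hp2 ht).dotProduct_mulVec_nonneg c
  simpa [dotProduct, Matrix.mulVec, Finset.mul_sum, nrbmCovariance, mul_assoc, mul_comm,
    mul_left_comm] using hquad

/-- The covariance kernel `(t ∨ s)^p (t ∧ s)^{1-p} / (1-2p)` of noise reinforced Brownian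
motion with reinforcement parameter `p ∈ (0, 1/2)` is positive semidefinite.
Powers are real powers (`Real.rpow`), so the summand vanishes when `min (t i) (t j) = 0`. -/
theorem nrbm_covariance_posSemidef (p : ℝ) (hp0 : 0 < p) (hp2 : p < 1 / 2)
    (n : ℕ) (hn : 1 ≤ n) (t : Fin n → ℝ) (ht : ∀ i, 0 ≤ t i) (c : Fin n → ℝ) :
    0 ≤ ∑ i, ∑ j, c i * c j *
      ((max (t i) (t j)) ^ p * (min (t i) (t j)) ^ (1 - p) / (1 - 2 * p)) :=
  nrbm_covariance_posSemidef_general p hp2 n t ht c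
end

section
/- Let p ∈ (0,1) and let η be a Yule–Simon random variable with parameter 1/p, i.e. P(η = k) = p^{-1} B(k, 1/p + 1) for k ≥ 1. Then the tail probabilities satisfy lim_{n→∞} n^{1/p} · P(η > n) = Γ(1/p + 1); that is, lim_{n→∞} n^{1/p} · ∑_{k=n+1}^∞ p^{-1} B(k, 1/p + 1) = Γ(1/p + 1). -/
open Filter Real Finset Topology

/-! `f_p(k) = Γ(ρ + 1) (Γ(k)/Γ(k + ρ) - Γ(k + 1)/Γ(k + 1 + ρ))` with `ρ = 1/p`, so the tail
`P(η > n)` telescopes to `Γ(ρ + 1) Γ(n + 1)/Γ(n + 1 + ρ)`. Euler's limit formula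
`n^ρ n! / (ρ (ρ + 1) ⋯ (ρ + n)) → Γ(ρ)` says exactly that `n^ρ Γ(n + 1)/Γ(n + 1 + ρ) → 1`. -/

/-- The Yule–Simon mass function with parameter `1/p`:
`f_p(k) = p⁻¹ B(k, 1/p + 1)` where `B(x,y) = Γ(x)Γ(y)/Γ(x+y)`. -/
noncomputable def yuleSimonPMF (p : ℝ) (k : ℕ) : ℝ :=
  p⁻¹ * (Real.Gamma k * Real.Gamma (1 / p + 1) / Real.Gamma ((k : ℝ) + 1 / p + 1))

theorem hasSum_sub_succ_of_antitone {f : ℕ → ℝ} {l : ℝ} (hf : Antitone f)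
    (hl : Tendsto f atTop (𝓝 l)) : HasSum (fun n ↦ f n - f (n + 1)) (f 0 - l) := by
  rw [hasSum_iff_tendsto_nat_of_nonneg fun n ↦ sub_nonneg.2 (hf n.le_succ)]
  simp_rw [sum_range_sub']
  exact tendsto_const_nhds.sub hl

noncomputable def gammaRatio (ρ x : ℝ) : ℝ := Gamma x / Gamma (x + ρ)

theorem gammaRatio_sub_gammaRatio_add_one {ρ x : ℝ} (hρ : 0 ≤ ρ) (hx : 0 < x) :
    gammaRatio ρ x - gammaRatio ρ (x + 1) = ρ * Gamma x / Gamma (x + ρ + 1) := by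
  have hxρ : 0 < x + ρ := by positivity
  rw [gammaRatio, gammaRatio, add_right_comm, Gamma_add_one hx.ne', Gamma_add_one hxρ.ne']
  have := (Gamma_pos_of_pos hxρ).ne'
  field_simp
  ring

theorem gammaRatio_add_one_le {ρ x : ℝ} (hρ : 0 ≤ ρ) (hx : 0 < x) :
    gammaRatio ρ (x + 1) ≤ gammaRatio ρ x := by
  rw [← sub_nonneg, gammaRatio_sub_gammaRatio_add_one hρ hx]
  have := Gamma_pos_of_pos hx
  have := Gamma_pos_of_pos (by positivity : 0 < x + ρ + 1)
  positivity

theorem Gamma_add_nat_add_one_eq_prod_mul {ρ : ℝ} (hρ : 0 < ρ) (n : ℕ) :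
    Gamma (ρ + n + 1) = (∏ j ∈ range (n + 1), (ρ + j)) * Gamma ρ := by
  induction n with
  | zero => simp [Gamma_add_one hρ.ne']
  | succ n ih =>
    rw [Nat.cast_succ, ← add_assoc, Gamma_add_one (by positivity), ih, prod_range_succ _ (n + 1)]
    push_cast
    ring

theorem rpow_mul_gammaRatio_nat_add_one {ρ : ℝ} (hρ : 0 < ρ) (n : ℕ) :
    (n : ℝ) ^ ρ * gammaRatio ρ (n + 1) = GammaSeq ρ n / Gamma ρ := by
  rw [gammaRatio, GammaSeq, Gamma_nat_eq_factorial, add_comm _ ρ, ← add_assoc,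
    Gamma_add_nat_add_one_eq_prod_mul hρ]
  have := (Gamma_pos_of_pos hρ).ne'
  have : (∏ j ∈ range (n + 1), (ρ + j)) ≠ 0 := prod_ne_zero_iff.2 fun j _ ↦ by positivity
  field_simp

theorem tendsto_rpow_mul_gammaRatio_nat_add_one {ρ : ℝ} (hρ : 0 < ρ) :
    Tendsto (fun n : ℕ ↦ (n : ℝ) ^ ρ * gammaRatio ρ (n + 1)) atTop (𝓝 1) := by
  simp_rw [rpow_mul_gammaRatio_nat_add_one hρ]
  rw [← div_self (Gamma_pos_of_pos hρ).ne']
  exact (GammaSeq_tendsto_Gamma ρ).div_const _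

theorem tendsto_gammaRatio_nat_add_one {ρ : ℝ} (hρ : 0 < ρ) :
    Tendsto (fun n : ℕ ↦ gammaRatio ρ (n + 1)) atTop (𝓝 0) := by
  have hpow : Tendsto (fun n : ℕ ↦ (n : ℝ) ^ ρ) atTop atTop :=
    (tendsto_rpow_atTop hρ).comp tendsto_natCast_atTop_atTop
  refine ((tendsto_rpow_mul_gammaRatio_nat_add_one hρ).div_atTop hpow).congr' ?_
  filter_upwards [eventually_ne_atTop 0] with n hn
  have : (n : ℝ) ^ ρ ≠ 0 := by positivity
  field_simp

theorem yuleSimonPMF_eq_sub {p : ℝ} (hp : 0 < p) {k : ℕ} (hk : k ≠ 0) :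
    yuleSimonPMF p k =
      Gamma (1 / p + 1) * (gammaRatio (1 / p) k - gammaRatio (1 / p) (k + 1)) := by
  rw [gammaRatio_sub_gammaRatio_add_one (by positivity) (by positivity), yuleSimonPMF]
  ring

theorem hasSum_yuleSimonPMF_tail {p : ℝ} (hp : 0 < p) (n : ℕ) :
    HasSum (fun j : ℕ ↦ yuleSimonPMF p (n + 1 + j))
      (Gamma (1 / p + 1) * gammaRatio (1 / p) (n + 1)) := by
  have hρ : 0 < 1 / p := by positivity
  set g : ℕ → ℝ := fun j ↦ gammaRatio (1 / p) (n + 1 + j)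
  have hg : Antitone g := antitone_nat_of_succ_le fun j ↦ by
    simpa [g, add_assoc] using gammaRatio_add_one_le hρ.le (by positivity : (0 : ℝ) < n + 1 + j)
  have hg0 : Tendsto g atTop (𝓝 0) := by
    refine ((tendsto_gammaRatio_nat_add_one hρ).comp (tendsto_add_atTop_nat n)).congr fun j ↦ ?_
    simp only [g, Function.comp_apply]
    push_cast
    ring_nf
  have hpmf : (fun j : ℕ ↦ yuleSimonPMF p (n + 1 + j)) =
      fun j ↦ Gamma (1 / p + 1) * (g j - g (j + 1)) := by
    ext j
    rw [yuleSimonPMF_eq_sub hp (by omega)]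
    simp [g, add_assoc]
  rw [hpmf]
  simpa [g] using (hasSum_sub_succ_of_antitone hg hg0).mul_left (Gamma (1 / p + 1))

theorem yuleSimon_tail_asymptotic_general (p : ℝ) (hp0 : 0 < p) :
    Filter.Tendsto
      (fun n : ℕ => (n : ℝ) ^ (1 / p) * ∑' j : ℕ, yuleSimonPMF p (n + 1 + j))
      Filter.atTop (nhds (Real.Gamma (1 / p + 1))) := by
  simp_rw [(hasSum_yuleSimonPMF_tail hp0 _).tsum_eq, mul_left_comm _ (Gamma _)]
  simpa using (tendsto_rpow_mul_gammaRatio_nat_add_one (by positivity : 0 < 1 / p)).const_mul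
    (Gamma (1 / p + 1))

/-- Tail asymptotics of the Yule–Simon distribution with parameter `1/p`:
`n^{1/p} · P(η > n) = n^{1/p} ∑_{k>n} f_p(k) → Γ(1/p + 1)` as `n → ∞`.
Here `n^{1/p}` is a real power. -/
theorem yuleSimon_tail_asymptotic (p : ℝ) (hp0 : 0 < p) (hp1 : p < 1) :
    Filter.Tendsto
      (fun n : ℕ => (n : ℝ) ^ (1 / p) * ∑' j : ℕ, yuleSimonPMF p (n + 1 + j))
      Filter.atTop (nhds (Real.Gamma (1 / p + 1))) :=
  yuleSimon_tail_asymptotic_general p hp0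
end

section
/- Let Λ be a measure on (0,∞) with ∫_{(0,∞)} min(x, 1) Λ(dx) < ∞, let Φ(λ) := ∫_{(0,∞)} (1 − e^{−λx}) Λ(dx) for λ ≥ 0, and let β(Λ) := inf{ r > 0 : ∫_{(0,1]} x^r Λ(dx) < ∞ }. Then for every ε > 0, Φ(λ)/λ^{β(Λ)+ε} → 0 as λ → ∞. -/
/-!
On `(0, 1]` the integrand is bounded by `(λx)^s` for any `s ∈ (0, 1]`, and on `(1, ∞)` by `1`.
Hence `Φ(λ) ≤ λ^s ∫_{(0,1]} x^s Λ(dx) + Λ(1, ∞)`, which is `O(λ^s)` as soon as the integral is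
finite. Such exponents `s` exist arbitrarily close to `β(Λ)` from above (`s = 1` works by the
integrability of `min x 1`), so `Φ(λ) = o(λ^{β(Λ)+ε})`.
-/

open MeasureTheory

noncomputable def bgIndexSub (Λ : Measure ℝ) : ℝ :=
  sInf {r : ℝ | 0 < r ∧ ∫⁻ x in Set.Ioc (0 : ℝ) 1, ENNReal.ofReal (x ^ r) ∂Λ < ⊤}

open Set Filter Asymptotics Real

lemma Real.one_sub_exp_neg_le_rpow {s u : ℝ} (hs : 0 < s) (hs1 : s ≤ 1) (hu : 0 ≤ u) :
    1 - exp (-u) ≤ u ^ s := by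
  rcases le_or_gt u 1 with hu1 | hu1
  · calc 1 - exp (-u) ≤ u := by linarith [add_one_le_exp (-u)]
      _ = u ^ (1 : ℝ) := (rpow_one u).symm
      _ ≤ u ^ s := rpow_le_rpow_of_exponent_ge' hu hu1 hs.le hs1
  · linarith [one_le_rpow hu1.le hs.le, exp_pos (-u)]

lemma Real.one_sub_exp_neg_mul_nonneg {l x : ℝ} (hl : 0 ≤ l) (hx : 0 ≤ x) :
    0 ≤ 1 - exp (-l * x) := by
  rw [sub_nonneg, exp_le_one_iff]
  nlinarith

lemma Real.isLittleO_rpow_rpow_atTop {s q : ℝ} (h : s < q) :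
    (fun x : ℝ => x ^ s) =o[atTop] fun x => x ^ q := by
  refine (isLittleO_iff_tendsto' ?_).2 ?_
  · filter_upwards [eventually_gt_atTop 0] with x hx hxq
    exact absurd hxq (rpow_pos_of_pos hx q).ne'
  · refine (tendsto_rpow_neg_atTop (sub_pos.2 h)).congr' ?_
    filter_upwards [eventually_gt_atTop 0] with x hx
    rw [← rpow_sub hx, neg_sub]

namespace MeasureTheory.Measure

variable {Λ : Measure ℝ}

lemma lintegral_Ioc_rpow_one_lt_top_of_lintegral_min_lt_top
    (hint : ∫⁻ x in Ioi (0 : ℝ), ENNReal.ofReal (min x 1) ∂Λ < ⊤) :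
    ∫⁻ x in Ioc (0 : ℝ) 1, ENNReal.ofReal (x ^ (1 : ℝ)) ∂Λ < ⊤ := by
  refine lt_of_le_of_lt ?_ hint
  calc ∫⁻ x in Ioc (0 : ℝ) 1, ENNReal.ofReal (x ^ (1 : ℝ)) ∂Λ
      ≤ ∫⁻ x in Ioc (0 : ℝ) 1, ENNReal.ofReal (min x 1) ∂Λ :=
        setLIntegral_mono (by fun_prop) fun x hx => by
          rw [rpow_one, min_eq_left hx.2]
    _ ≤ ∫⁻ x in Ioi (0 : ℝ), ENNReal.ofReal (min x 1) ∂Λ :=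
        lintegral_mono_set Ioc_subset_Ioi_self

lemma measure_Ioi_one_lt_top_of_lintegral_min_lt_top
    (hint : ∫⁻ x in Ioi (0 : ℝ), ENNReal.ofReal (min x 1) ∂Λ < ⊤) :
    Λ (Ioi 1) < ⊤ := by
  refine lt_of_le_of_lt ?_ hint
  calc Λ (Ioi 1) = ∫⁻ x in Ioi (1 : ℝ), ENNReal.ofReal (min x 1) ∂Λ := by
        rw [← setLIntegral_one]
        refine setLIntegral_congr_fun measurableSet_Ioi fun x hx => ?_
        rw [min_eq_right (le_of_lt hx), ENNReal.ofReal_one]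
    _ ≤ ∫⁻ x in Ioi (0 : ℝ), ENNReal.ofReal (min x 1) ∂Λ :=
        lintegral_mono_set (Ioi_subset_Ioi zero_le_one)

lemma exists_lintegral_Ioc_rpow_lt_top_lt_bgIndexSub_add
    (hint : ∫⁻ x in Ioi (0 : ℝ), ENNReal.ofReal (min x 1) ∂Λ < ⊤) {ε : ℝ} (hε : 0 < ε) :
    ∃ s, 0 < s ∧ s ≤ 1 ∧ s < bgIndexSub Λ + ε ∧
      ∫⁻ x in Ioc (0 : ℝ) 1, ENNReal.ofReal (x ^ s) ∂Λ < ⊤ := by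
  have h1 : (1 : ℝ) ∈ {r : ℝ | 0 < r ∧ ∫⁻ x in Ioc (0 : ℝ) 1, ENNReal.ofReal (x ^ r) ∂Λ < ⊤} :=
    ⟨one_pos, lintegral_Ioc_rpow_one_lt_top_of_lintegral_min_lt_top hint⟩
  obtain ⟨t, ⟨ht0, htA⟩, htlt⟩ := Real.lt_sInf_add_pos ⟨1, h1⟩ hε
  rcases le_total t 1 with ht1 | ht1
  · exact ⟨t, ht0, ht1, htlt, htA⟩
  · exact ⟨1, one_pos, le_rfl, ht1.trans_lt htlt, h1.2⟩

lemma lintegral_one_sub_exp_neg_mul_le {s l : ℝ} (hs : 0 < s) (hs1 : s ≤ 1) (hl : 0 ≤ l) :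
    ∫⁻ x in Ioi (0 : ℝ), ENNReal.ofReal (1 - exp (-l * x)) ∂Λ ≤
      ENNReal.ofReal (l ^ s) * ∫⁻ x in Ioc (0 : ℝ) 1, ENNReal.ofReal (x ^ s) ∂Λ + Λ (Ioi 1) := by
  rw [← Ioc_union_Ioi_eq_Ioi zero_le_one,
    lintegral_union measurableSet_Ioi (Ioc_disjoint_Ioi le_rfl)]
  gcongr
  · calc ∫⁻ x in Ioc (0 : ℝ) 1, ENNReal.ofReal (1 - exp (-l * x)) ∂Λ
        ≤ ∫⁻ x in Ioc (0 : ℝ) 1, ENNReal.ofReal (l ^ s) * ENNReal.ofReal (x ^ s) ∂Λ :=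
          setLIntegral_mono (by fun_prop) fun x hx => by
            rw [← ENNReal.ofReal_mul (rpow_nonneg hl s), ← mul_rpow hl hx.1.le, neg_mul]
            exact ENNReal.ofReal_le_ofReal
              (one_sub_exp_neg_le_rpow hs hs1 (mul_nonneg hl hx.1.le))
      _ = _ := lintegral_const_mul' _ _ ENNReal.ofReal_ne_top
  · rw [← setLIntegral_one]
    exact setLIntegral_mono measurable_const fun x _ =>
      ENNReal.ofReal_le_one.2 (by linarith [exp_pos (-l * x)])

lemma isBigO_setIntegral_one_sub_exp_neg_mul_rpow {s : ℝ} (hs : 0 < s) (hs1 : s ≤ 1)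
    (hA : ∫⁻ x in Ioc (0 : ℝ) 1, ENNReal.ofReal (x ^ s) ∂Λ < ⊤) (hB : Λ (Ioi 1) < ⊤) :
    (fun l : ℝ => ∫ x in Ioi (0 : ℝ), (1 - exp (-l * x)) ∂Λ) =O[atTop] fun l => l ^ s := by
  set C₁ := (∫⁻ x in Ioc (0 : ℝ) 1, ENNReal.ofReal (x ^ s) ∂Λ).toReal
  set C₂ := (Λ (Ioi 1)).toReal
  refine IsBigO.of_bound (C₁ + C₂) ?_
  filter_upwards [eventually_ge_atTop 1] with l hl
  have hl0 : 0 ≤ l := zero_le_one.trans hl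
  have hls : 1 ≤ l ^ s := one_le_rpow hl hs.le
  have hnonneg : 0 ≤ᵐ[Λ.restrict (Ioi 0)] fun x => 1 - exp (-l * x) :=
    ae_restrict_of_forall_mem measurableSet_Ioi fun x hx =>
      one_sub_exp_neg_mul_nonneg hl0 (le_of_lt hx)
  have hbound : ∫ x in Ioi (0 : ℝ), (1 - exp (-l * x)) ∂Λ ≤ l ^ s * C₁ + C₂ := by
    rw [integral_eq_lintegral_of_nonneg_ae hnonneg (by fun_prop)]
    calc _ ≤ (ENNReal.ofReal (l ^ s) * ∫⁻ x in Ioc (0 : ℝ) 1, ENNReal.ofReal (x ^ s) ∂Λ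
            + Λ (Ioi 1)).toReal :=
          ENNReal.toReal_mono (by finiteness) (lintegral_one_sub_exp_neg_mul_le hs hs1 hl0)
      _ = l ^ s * C₁ + C₂ := by
          rw [ENNReal.toReal_add (by finiteness) hB.ne, ENNReal.toReal_mul,
            ENNReal.toReal_ofReal (rpow_nonneg hl0 s)]
  rw [norm_of_nonneg (integral_nonneg_of_ae hnonneg), norm_of_nonneg (by linarith)]
  nlinarith [ENNReal.toReal_nonneg (a := Λ (Ioi 1))]

end MeasureTheory.Measure

theorem subordinator_laplace_exponent_growth_general
    (Λ : Measure ℝ)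
    (hint : ∫⁻ x in Set.Ioi (0 : ℝ), ENNReal.ofReal (min x 1) ∂Λ < ⊤)
    (Φ : ℝ → ℝ)
    (hΦ : ∀ l : ℝ, 0 ≤ l → Φ l = ∫ x in Set.Ioi (0 : ℝ), (1 - Real.exp (-l * x)) ∂Λ)
    (ε : ℝ) (hε : 0 < ε) :
    Filter.Tendsto (fun l : ℝ => Φ l / l ^ (bgIndexSub Λ + ε)) Filter.atTop (nhds 0) := by
  obtain ⟨s, hs0, hs1, hslt, hA⟩ := Measure.exists_lintegral_Ioc_rpow_lt_top_lt_bgIndexSub_add hint hε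
  have hΦ_eq : (fun l => ∫ x in Ioi (0 : ℝ), (1 - exp (-l * x)) ∂Λ) =ᶠ[atTop] Φ := by
    filter_upwards [eventually_ge_atTop 0] with l hl
    exact (hΦ l hl).symm
  have hΦ_bigO : Φ =O[atTop] fun l => l ^ s :=
    (Measure.isBigO_setIntegral_one_sub_exp_neg_mul_rpow hs0 hs1 hA
      (Measure.measure_Ioi_one_lt_top_of_lintegral_min_lt_top hint)).congr' hΦ_eq
      EventuallyEq.rfl
  exact (hΦ_bigO.trans_isLittleO (isLittleO_rpow_rpow_atTop hslt)).tendsto_div_nhds_zero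

/-- Blumenthal–Getoor: if `Φ` is the Laplace exponent of a driftless subordinator with
Lévy measure `Λ`, then for every `ε > 0`, `Φ(λ)/λ^{β(Λ)+ε} → 0` as `λ → ∞`. -/
theorem subordinator_laplace_exponent_growth
    (Λ : Measure ℝ) (hsupp : Λ (Set.Iic 0) = 0)
    (hint : ∫⁻ x in Set.Ioi (0 : ℝ), ENNReal.ofReal (min x 1) ∂Λ < ⊤)
    (Φ : ℝ → ℝ)
    (hΦ : ∀ l : ℝ, 0 ≤ l → Φ l = ∫ x in Set.Ioi (0 : ℝ), (1 - Real.exp (-l * x)) ∂Λ)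
    (ε : ℝ) (hε : 0 < ε) :
    Filter.Tendsto (fun l : ℝ => Φ l / l ^ (bgIndexSub Λ + ε)) Filter.atTop (nhds 0) :=
  subordinator_laplace_exponent_growth_general Λ hint Φ hΦ ε hε
end

section
/- Let a ∈ ℝ and let Λ be a Lévy measure on ℝ, and define the characteristic exponent (with no Gaussian component) Ψ(λ) = i·a·λ + ∫_ℝ (e^{iλx} − 1 − iλx·1_{|x|≤1}) Λ(dx) for λ ∈ ℝ, and let β(Λ) be the Blumenthal–Getoor index of Λ. Then for every η > 0, as |λ| → ∞: (i) if ∫_{[-1,1]} |x| Λ(dx) = ∞, then |Ψ(λ)| / |λ|^{β(Λ)+η} → 0; (ii) if ∫_{[-1,1]} |x| Λ(dx) < ∞, then |Ψ(λ)| / |λ|^{1+η} → 0. -/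
/-!
Split the Lévy integral at `|x| = 1`. For every `r ∈ [1, 2]` the compensated integrand is
bounded by `2 |λ x| ^ r` on `[-1, 1]` (it is quadratic in `λ x` for `|λ x| ≤ 1` and linear
beyond) and by `2` outside, so `Ψ(λ) = O(|λ| ^ r)` as soon as `∫_{[-1,1]} |x| ^ r dΛ < ∞`.
Case (ii) is `r = 1`. In case (i) every exponent with a finite moment is at least `1`, and the
definition of `β(Λ)` as an infimum supplies one below `β(Λ) + η`.
-/

open MeasureTheory Filter

/-- The Blumenthal–Getoor index of a measure `Λ` on `ℝ`:
`β(Λ) = inf { r > 0 : ∫_{[-1,1]} |x|^r Λ(dx) < ∞ }` (real powers). -/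
noncomputable def bgIndex (Λ : Measure ℝ) : ℝ :=
  sInf {r : ℝ | 0 < r ∧ ∫⁻ x in Set.Icc (-1 : ℝ) 1, ENNReal.ofReal (|x| ^ r) ∂Λ < ⊤}

open Complex in
lemma norm_cexp_I_mul_sub_one_sub_le_rpow {r : ℝ} (hr1 : 1 ≤ r) (hr2 : r ≤ 2) (θ : ℝ) :
    ‖exp (I * θ) - 1 - I * θ‖ ≤ 2 * |θ| ^ r := by
  have hIθ : ‖I * θ‖ = |θ| := by simp
  rcases le_or_gt |θ| 1 with hθ | hθ
  · have hsq : |θ| ^ 2 ≤ |θ| ^ r := by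
      simpa [Real.rpow_two] using
        Real.rpow_le_rpow_of_exponent_ge' (abs_nonneg θ) hθ (by linarith) hr2
    have hquad := norm_exp_sub_one_sub_id_le (x := I * θ) (hIθ ▸ hθ)
    rw [hIθ] at hquad
    linarith [Real.rpow_nonneg (abs_nonneg θ) r]
  · have hθr : |θ| ≤ |θ| ^ r := by
      simpa using Real.rpow_le_rpow_of_exponent_le hθ.le hr1
    calc ‖exp (I * θ) - 1 - I * θ‖ ≤ ‖exp (I * θ) - 1‖ + ‖I * θ‖ := norm_sub_le _ _
      _ ≤ |θ| + |θ| := by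
          rw [hIθ]; simpa using add_le_add_right (Real.norm_exp_I_mul_ofReal_sub_one_le (x := θ)) |θ|
      _ ≤ 2 * |θ| ^ r := by linarith

noncomputable def levyIntegrand (l x : ℝ) : ℂ :=
  Complex.exp (Complex.I * l * x) - 1 - if |x| ≤ 1 then Complex.I * l * x else 0

lemma norm_levyIntegrand_le_of_abs_le_one {r : ℝ} (hr1 : 1 ≤ r) (hr2 : r ≤ 2) (l : ℝ) {x : ℝ}
    (hx : |x| ≤ 1) : ‖levyIntegrand l x‖ ≤ 2 * |l| ^ r * |x| ^ r := by
  have h := norm_cexp_I_mul_sub_one_sub_le_rpow hr1 hr2 (l * x)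
  rw [abs_mul, Real.mul_rpow (abs_nonneg l) (abs_nonneg x), ← mul_assoc] at h
  simpa [levyIntegrand, hx, mul_assoc] using h

lemma norm_levyIntegrand_le_two_of_one_lt_abs (l : ℝ) {x : ℝ} (hx : 1 < |x|) :
    ‖levyIntegrand l x‖ ≤ 2 := by
  have h := norm_sub_le (Complex.exp (Complex.I * (l * x : ℝ))) 1
  simp only [Complex.norm_exp_I_mul_ofReal, norm_one] at h
  simpa [levyIntegrand, hx.not_ge, mul_assoc] using h.trans_eq one_add_one_eq_two

lemma tendsto_abs_rpow_div_abs_rpow_cocompact {r p : ℝ} (hrp : r < p) :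
    Tendsto (fun l : ℝ => |l| ^ r / |l| ^ p) (cocompact ℝ) (nhds 0) := by
  refine ((tendsto_rpow_neg_atTop (sub_pos.2 hrp)).comp tendsto_norm_cocompact_atTop).congr' ?_
  filter_upwards [tendsto_norm_cocompact_atTop.eventually_gt_atTop 0] with l hl
  simp only [Function.comp_apply, Real.norm_eq_abs, neg_sub] at hl ⊢
  exact Real.rpow_sub hl r p

section

variable {Λ : Measure ℝ}

lemma measure_compl_Icc_lt_top
    (hΛint : ∫⁻ x, ENNReal.ofReal (min (x ^ 2) 1) ∂Λ < ⊤) : Λ (Set.Icc (-1) 1)ᶜ < ⊤ := by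
  refine lt_of_le_of_lt ?_ hΛint
  calc Λ (Set.Icc (-1) 1)ᶜ = ∫⁻ _ in (Set.Icc (-1) 1)ᶜ, 1 ∂Λ := (setLIntegral_one _).symm
    _ ≤ ∫⁻ x in (Set.Icc (-1) 1)ᶜ, ENNReal.ofReal (min (x ^ 2) 1) ∂Λ := by
        refine setLIntegral_mono' measurableSet_Icc.compl fun x hx => ?_
        have hx1 : 1 < |x| := by rwa [Set.mem_compl_iff, Set.mem_Icc, ← abs_le, not_le] at hx
        rw [min_eq_right (by nlinarith [sq_abs x]), ENNReal.ofReal_one]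
    _ ≤ _ := setLIntegral_le_lintegral _ _

lemma lintegral_norm_levyIntegrand_le {r : ℝ} (hr1 : 1 ≤ r) (hr2 : r ≤ 2)
    (l : ℝ) :
    ∫⁻ x, ENNReal.ofReal ‖levyIntegrand l x‖ ∂Λ ≤
      ENNReal.ofReal (2 * |l| ^ r) * ∫⁻ x in Set.Icc (-1) 1, ENNReal.ofReal (|x| ^ r) ∂Λ +
        2 * Λ (Set.Icc (-1) 1)ᶜ := by
  rw [← lintegral_add_compl _ measurableSet_Icc, ← lintegral_const_mul' _ _ ENNReal.ofReal_ne_top,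
    ← setLIntegral_const]
  refine add_le_add (setLIntegral_mono' measurableSet_Icc fun x hx => ?_)
    (setLIntegral_mono' measurableSet_Icc.compl fun x hx => ?_)
  · rw [← ENNReal.ofReal_mul (by positivity)]
    exact ENNReal.ofReal_le_ofReal <| norm_levyIntegrand_le_of_abs_le_one hr1 hr2 l (abs_le.2 hx)
  · rw [Set.mem_compl_iff, Set.mem_Icc, ← abs_le, not_le] at hx
    simpa using ENNReal.ofReal_le_ofReal (norm_levyIntegrand_le_two_of_one_lt_abs l hx)

lemma norm_integral_levyIntegrand_le {r : ℝ} (hr1 : 1 ≤ r) (hr2 : r ≤ 2)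
    (hI : ∫⁻ x in Set.Icc (-1) 1, ENNReal.ofReal (|x| ^ r) ∂Λ < ⊤)
    (hT : Λ (Set.Icc (-1) 1)ᶜ < ⊤) (l : ℝ) :
    ‖∫ x, levyIntegrand l x ∂Λ‖ ≤
      2 * (∫⁻ x in Set.Icc (-1) 1, ENNReal.ofReal (|x| ^ r) ∂Λ).toReal * |l| ^ r +
        2 * (Λ (Set.Icc (-1) 1)ᶜ).toReal := by
  have hfin₁ : ENNReal.ofReal (2 * |l| ^ r) * ∫⁻ x in Set.Icc (-1) 1, ENNReal.ofReal (|x| ^ r) ∂Λ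
      ≠ ⊤ := ENNReal.mul_ne_top ENNReal.ofReal_ne_top hI.ne
  have hfin₂ : 2 * Λ (Set.Icc (-1) 1)ᶜ ≠ ⊤ := ENNReal.mul_ne_top ENNReal.ofNat_ne_top hT.ne
  refine (norm_integral_le_lintegral_norm _).trans <|
    (ENNReal.toReal_mono (ENNReal.add_ne_top.2 ⟨hfin₁, hfin₂⟩)
      (lintegral_norm_levyIntegrand_le hr1 hr2 l)).trans_eq ?_
  rw [ENNReal.toReal_add hfin₁ hfin₂, ENNReal.toReal_mul, ENNReal.toReal_mul,
    ENNReal.toReal_ofReal (by positivity)]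
  simp only [ENNReal.toReal_ofNat]
  ring

lemma tendsto_norm_levyExponent_div_rpow (a : ℝ)
    (hΛint : ∫⁻ x, ENNReal.ofReal (min (x ^ 2) 1) ∂Λ < ⊤) {r p : ℝ} (hr1 : 1 ≤ r) (hr2 : r ≤ 2)
    (hrp : r < p) (hI : ∫⁻ x in Set.Icc (-1) 1, ENNReal.ofReal (|x| ^ r) ∂Λ < ⊤) :
    Tendsto (fun l : ℝ => ‖Complex.I * a * l + ∫ x, levyIntegrand l x ∂Λ‖ / |l| ^ p)
      (cocompact ℝ) (nhds 0) := by
  set C₁ := (∫⁻ x in Set.Icc (-1) 1, ENNReal.ofReal (|x| ^ r) ∂Λ).toReal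
  set C₂ := (Λ (Set.Icc (-1) 1)ᶜ).toReal
  have hbound : ∀ l : ℝ, 1 ≤ |l| →
      ‖Complex.I * a * l + ∫ x, levyIntegrand l x ∂Λ‖ ≤ (|a| + 2 * C₁ + 2 * C₂) * |l| ^ r := by
    intro l hl
    have hlr : |l| ≤ |l| ^ r := by simpa using Real.rpow_le_rpow_of_exponent_le hl hr1
    have hr : 1 ≤ |l| ^ r := Real.one_le_rpow hl (by linarith)
    have hC₁ : 0 ≤ C₁ := ENNReal.toReal_nonneg
    have hC₂ : 0 ≤ C₂ := ENNReal.toReal_nonneg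
    calc ‖Complex.I * a * l + ∫ x, levyIntegrand l x ∂Λ‖
        ≤ |a| * |l| + (2 * C₁ * |l| ^ r + 2 * C₂) := by
          refine (norm_add_le _ _).trans (add_le_add (by simp) ?_)
          exact norm_integral_levyIntegrand_le hr1 hr2 hI (measure_compl_Icc_lt_top hΛint) l
      _ ≤ (|a| + 2 * C₁ + 2 * C₂) * |l| ^ r := by
          nlinarith [mul_le_mul_of_nonneg_left hlr (abs_nonneg a),
            mul_le_mul_of_nonneg_left hr hC₂]
  refine squeeze_zero' (Eventually.of_forall fun l => by positivity) ?_
    (by simpa using (tendsto_abs_rpow_div_abs_rpow_cocompact hrp).const_mul (|a| + 2 * C₁ + 2 * C₂))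
  filter_upwards [tendsto_norm_cocompact_atTop.eventually_ge_atTop 1] with l hl
  rw [mul_div_assoc']
  exact div_le_div_of_nonneg_right (hbound l hl) (by positivity)

lemma setLIntegral_Icc_abs_rpow_antitone {r s : ℝ} (hr : 0 ≤ r) (hrs : r ≤ s) :
    ∫⁻ x in Set.Icc (-1) 1, ENNReal.ofReal (|x| ^ s) ∂Λ ≤
      ∫⁻ x in Set.Icc (-1) 1, ENNReal.ofReal (|x| ^ r) ∂Λ :=
  setLIntegral_mono' measurableSet_Icc fun x hx => ENNReal.ofReal_le_ofReal <|
    Real.rpow_le_rpow_of_exponent_ge' (abs_nonneg x) (abs_le.2 hx) hr hrs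

lemma setLIntegral_Icc_abs_rpow_two_lt_top
    (hΛint : ∫⁻ x, ENNReal.ofReal (min (x ^ 2) 1) ∂Λ < ⊤) :
    ∫⁻ x in Set.Icc (-1) 1, ENNReal.ofReal (|x| ^ (2 : ℝ)) ∂Λ < ⊤ := by
  refine lt_of_le_of_lt ?_ hΛint
  refine (setLIntegral_mono' measurableSet_Icc fun x hx => ?_).trans (setLIntegral_le_lintegral _ _)
  have hx2 : x ^ 2 ≤ 1 := by nlinarith [abs_le.2 hx, sq_abs x, abs_nonneg x]
  rw [Real.rpow_two, sq_abs, min_eq_left hx2]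

lemma exists_setLIntegral_Icc_abs_rpow_lt_top_of_bgIndex_lt
    (hΛint : ∫⁻ x, ENNReal.ofReal (min (x ^ 2) 1) ∂Λ < ⊤)
    (hinf : ∫⁻ x in Set.Icc (-1) 1, ENNReal.ofReal |x| ∂Λ = ⊤) {p : ℝ} (hp : bgIndex Λ < p) :
    ∃ r, 1 ≤ r ∧ r ≤ 2 ∧ r < p ∧ ∫⁻ x in Set.Icc (-1) 1, ENNReal.ofReal (|x| ^ r) ∂Λ < ⊤ := by
  have htwo := setLIntegral_Icc_abs_rpow_two_lt_top hΛint
  obtain ⟨r, ⟨hr0, hrfin⟩, hrp⟩ := exists_lt_of_csInf_lt (by exact ⟨2, two_pos, htwo⟩) hp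
  have hr1 : 1 ≤ r := by
    by_contra! hr1
    have hmono := setLIntegral_Icc_abs_rpow_antitone (Λ := Λ) hr0.le hr1.le
    simp only [Real.rpow_one, hinf, top_le_iff] at hmono
    exact hrfin.ne hmono
  refine ⟨min r 2, le_min hr1 one_le_two, min_le_right _ _, (min_le_left _ _).trans_lt hrp, ?_⟩
  rcases le_total r 2 with h | h
  · rwa [min_eq_left h]
  · rwa [min_eq_right h]

end

theorem char_exponent_growth_general
    (a : ℝ) (Λ : Measure ℝ)
    (hΛint : ∫⁻ x : ℝ, ENNReal.ofReal (min (x ^ 2) 1) ∂Λ < ⊤)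
    (Ψ : ℝ → ℂ)
    (hΨ : ∀ l : ℝ, Ψ l = Complex.I * (a : ℂ) * (l : ℂ) +
      ∫ x : ℝ, (Complex.exp (Complex.I * (l : ℂ) * (x : ℂ)) - 1 -
        (if |x| ≤ 1 then Complex.I * (l : ℂ) * (x : ℂ) else 0)) ∂Λ)
    (η : ℝ) (hη : 0 < η) :
    ((∫⁻ x in Set.Icc (-1 : ℝ) 1, ENNReal.ofReal |x| ∂Λ = ⊤ →
        Tendsto (fun l : ℝ => ‖Ψ l‖ / |l| ^ (bgIndex Λ + η)) (cocompact ℝ) (nhds 0)) ∧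
      (∫⁻ x in Set.Icc (-1 : ℝ) 1, ENNReal.ofReal |x| ∂Λ < ⊤ →
        Tendsto (fun l : ℝ => ‖Ψ l‖ / |l| ^ (1 + η)) (cocompact ℝ) (nhds 0))) := by
  obtain rfl : Ψ = fun l => Complex.I * a * l + ∫ x, levyIntegrand l x ∂Λ := funext hΨ
  constructor
  · intro hinf
    obtain ⟨r, hr1, hr2, hrp, hI⟩ :=
      exists_setLIntegral_Icc_abs_rpow_lt_top_of_bgIndex_lt hΛint hinf (lt_add_of_pos_right _ hη)
    exact tendsto_norm_levyExponent_div_rpow a hΛint hr1 hr2 hrp hI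
  · intro hfin
    exact tendsto_norm_levyExponent_div_rpow a hΛint le_rfl one_le_two (by linarith)
      (by simpa only [Real.rpow_one] using hfin)

/-- Blumenthal–Getoor asymptotics of a characteristic exponent with no Gaussian component:
for every `η > 0`, as `|λ| → ∞` (the cocompact filter on `ℝ`),
`|Ψ(λ)|/|λ|^{β(Λ)+η} → 0` if `∫_{[-1,1]} |x| Λ(dx) = ∞`, and
`|Ψ(λ)|/|λ|^{1+η} → 0` if `∫_{[-1,1]} |x| Λ(dx) < ∞`. -/
theorem char_exponent_growth
    (a : ℝ) (Λ : Measure ℝ) (hΛ0 : Λ {0} = 0)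
    (hΛint : ∫⁻ x : ℝ, ENNReal.ofReal (min (x ^ 2) 1) ∂Λ < ⊤)
    (Ψ : ℝ → ℂ)
    (hΨ : ∀ l : ℝ, Ψ l = Complex.I * (a : ℂ) * (l : ℂ) +
      ∫ x : ℝ, (Complex.exp (Complex.I * (l : ℂ) * (x : ℂ)) - 1 -
        (if |x| ≤ 1 then Complex.I * (l : ℂ) * (x : ℂ) else 0)) ∂Λ)
    (η : ℝ) (hη : 0 < η) :
    ((∫⁻ x in Set.Icc (-1 : ℝ) 1, ENNReal.ofReal |x| ∂Λ = ⊤ →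
        Tendsto (fun l : ℝ => ‖Ψ l‖ / |l| ^ (bgIndex Λ + η)) (cocompact ℝ) (nhds 0)) ∧
      (∫⁻ x in Set.Icc (-1 : ℝ) 1, ENNReal.ofReal |x| ∂Λ < ⊤ →
        Tendsto (fun l : ℝ => ‖Ψ l‖ / |l| ^ (1 + η)) (cocompact ℝ) (nhds 0))) :=
  char_exponent_growth_general a Λ hΛint Ψ hΨ η hη
end

section
/- Let p ∈ (0,1) and let Λ be a Lévy measure on ℝ whose Blumenthal–Getoor index satisfies β(Λ) < 1/p. Then ∑_{k=1}^∞ p^{-1} B(k, 1/p + 1) ∫_ℝ min(k²x², 1) Λ(dx) < ∞. Equivalently, the image of the measure f_p ⊗ Λ under (k, x) ↦ k·x, where f_p is the Yule–Simon mass function with parameter 1/p, is again a Lévy measure. -/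
open MeasureTheory

/-!
Write `s = 1/p + 1`. Log-convexity of `Γ` gives `Γ(k) / Γ(k + s) ≤ (k - 1)^(-s)` for `k ≥ 2`,
so `f_p(k) = O(k^(-s))` and the Yule–Simon law has finite moments of every order `q < 1/p`.
Since `β(Λ) < 1/p`, there is `q ∈ (0, 2]` with `q < 1/p` and `∫_{[-1,1]} |x|^q dΛ < ∞`.
For `k ≥ 1` we have `min(k²x², 1) ≤ k^q min(|x|^q, 1)`, so the `k`-th integral is at most
`k^q` times a finite constant and the series is dominated by the `q`-th moment of `f_p`.
-/

open Filter Set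

namespace Real

theorem Gamma_mul_rpow_le_Gamma_add {n : ℕ} (hn : 2 ≤ n) {x : ℝ} (hx : 0 < x) :
    Gamma n * ((n : ℝ) - 1) ^ x ≤ Gamma (n + x) := by
  have hn1 : (0 : ℝ) < n - 1 := by
    have : (2 : ℝ) ≤ n := by exact_mod_cast hn
    linarith
  have hlog := BohrMollerup.f_add_nat_ge convexOn_log_Gamma (fun {y} hy => by
    rw [Function.comp_apply, Gamma_add_one hy.ne', log_mul hy.ne' (Gamma_pos_of_pos hy).ne',
      add_comm, Function.comp_apply]) hn hx
  have hΓn : 0 < Gamma n := Gamma_pos_of_pos (by linarith)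
  calc Gamma n * ((n : ℝ) - 1) ^ x = exp (log (Gamma n) + x * log (n - 1)) := by
        rw [exp_add, exp_log hΓn, rpow_def_of_pos hn1, mul_comm x]
    _ ≤ exp (log (Gamma (n + x))) := exp_le_exp.2 hlog
    _ = Gamma (n + x) := exp_log (Gamma_pos_of_pos (by linarith))

theorem Gamma_div_Gamma_add_le {n : ℕ} (hn : 2 ≤ n) {x : ℝ} (hx : 0 < x) :
    Gamma n / Gamma (n + x) ≤ 2 ^ x * (n : ℝ) ^ (-x) := by
  have h2n : (2 : ℝ) ≤ n := by exact_mod_cast hn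
  have hΓ : 0 < Gamma (n + x) := Gamma_pos_of_pos (by linarith)
  have hhalf : (n : ℝ) / 2 ≤ n - 1 := by linarith
  rw [div_le_iff₀ hΓ]
  calc Gamma n = Gamma n * ((n : ℝ) - 1) ^ x * ((n : ℝ) - 1) ^ (-x) := by
        rw [mul_assoc, ← rpow_add (by linarith), add_neg_cancel, rpow_zero, mul_one]
    _ ≤ Gamma (n + x) * ((n : ℝ) / 2) ^ (-x) :=
        mul_le_mul (Gamma_mul_rpow_le_Gamma_add hn hx)
          (rpow_le_rpow_of_nonpos (by linarith) hhalf (by linarith))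
          (rpow_nonneg (by linarith) _) hΓ.le
    _ = 2 ^ x * (n : ℝ) ^ (-x) * Gamma (n + x) := by
        rw [div_rpow (by positivity) zero_le_two, rpow_neg zero_le_two, div_inv_eq_mul]
        ring

end Real

theorem yuleSimonPMF_nonneg {p : ℝ} (hp : 0 < p) (k : ℕ) : 0 ≤ yuleSimonPMF p k := by
  unfold yuleSimonPMF
  positivity

theorem yuleSimonPMF_le {p : ℝ} (hp : 0 < p) {k : ℕ} (hk : 2 ≤ k) :
    yuleSimonPMF p k ≤
      p⁻¹ * Real.Gamma (1 / p + 1) * 2 ^ (1 / p + 1) * (k : ℝ) ^ (-(1 / p + 1)) := by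
  have hΓ := Real.Gamma_div_Gamma_add_le hk (x := 1 / p + 1) (by positivity)
  have hc : 0 ≤ p⁻¹ * Real.Gamma (1 / p + 1) := by positivity
  rw [yuleSimonPMF, mul_div_right_comm, add_assoc]
  calc _ = p⁻¹ * Real.Gamma (1 / p + 1) *
        (Real.Gamma k / Real.Gamma (k + (1 / p + 1))) := by ring
    _ ≤ p⁻¹ * Real.Gamma (1 / p + 1) * (2 ^ (1 / p + 1) * (k : ℝ) ^ (-(1 / p + 1))) :=
        mul_le_mul_of_nonneg_left hΓ hc
    _ = _ := by ring

theorem summable_yuleSimonPMF_mul_rpow {p q : ℝ} (hp : 0 < p) (hq : q < 1 / p) :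
    Summable fun k : ℕ => yuleSimonPMF p k * (k : ℝ) ^ q := by
  set C := p⁻¹ * Real.Gamma (1 / p + 1) * 2 ^ (1 / p + 1)
  have hsum : Summable fun k : ℕ => C * (k : ℝ) ^ (q - (1 / p + 1)) :=
    (Real.summable_nat_rpow.2 (by linarith)).mul_left C
  refine hsum.of_norm_bounded_eventually_nat ?_
  filter_upwards [eventually_ge_atTop 2] with k hk
  have hk0 : (0 : ℝ) < k := by positivity
  rw [Real.norm_of_nonneg (mul_nonneg (yuleSimonPMF_nonneg hp k) (by positivity)),
    sub_eq_add_neg, Real.rpow_add hk0]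
  calc yuleSimonPMF p k * (k : ℝ) ^ q ≤ C * (k : ℝ) ^ (-(1 / p + 1)) * (k : ℝ) ^ q :=
        mul_le_mul_of_nonneg_right (yuleSimonPMF_le hp hk) (by positivity)
    _ = _ := by ring

theorem min_sq_one_le_min_rpow_one (y : ℝ) {q : ℝ} (hq0 : 0 < q) (hq2 : q ≤ 2) :
    min (y ^ 2) 1 ≤ min (|y| ^ q) 1 := by
  rcases le_or_gt |y| 1 with hy | hy
  · rcases (abs_nonneg y).eq_or_lt with hy0 | hy0
    · simp [abs_eq_zero.1 hy0.symm, Real.zero_rpow hq0.ne']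
    · refine min_le_min_right 1 ?_
      calc y ^ 2 = |y| ^ (2 : ℝ) := by rw [Real.rpow_two, sq_abs]
        _ ≤ |y| ^ q := Real.rpow_le_rpow_of_exponent_ge hy0 hy hq2
  · have h1 : 1 ≤ |y| ^ q := Real.one_le_rpow hy.le hq0.le
    have h2 : 1 ≤ y ^ 2 := by nlinarith [sq_abs y]
    rw [min_eq_right h1, min_eq_right h2]

theorem min_sq_mul_sq_one_le_rpow_mul_min {k q : ℝ} (x : ℝ) (hk : 1 ≤ k) (hq0 : 0 < q)
    (hq2 : q ≤ 2) : min (k ^ 2 * x ^ 2) 1 ≤ k ^ q * min (|x| ^ q) 1 := by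
  have hkq : 1 ≤ k ^ q := Real.one_le_rpow hk hq0.le
  calc min (k ^ 2 * x ^ 2) 1 ≤ min (|k * x| ^ q) 1 := by
        rw [← mul_pow]; exact min_sq_one_le_min_rpow_one _ hq0 hq2
    _ = min (k ^ q * |x| ^ q) 1 := by
        rw [abs_mul, Real.mul_rpow (abs_nonneg k) (abs_nonneg x), abs_of_nonneg (by linarith)]
    _ ≤ min (k ^ q * |x| ^ q) (k ^ q * 1) := min_le_min_left _ (by linarith)
    _ = k ^ q * min (|x| ^ q) 1 := (mul_min_of_nonneg _ _ (by linarith)).symm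

section LevyMeasure

variable (Λ : Measure ℝ)

theorem measure_compl_Icc_le_lintegral_min_sq :
    Λ (Icc (-1 : ℝ) 1)ᶜ ≤ ∫⁻ x, ENNReal.ofReal (min (x ^ 2) 1) ∂Λ := by
  rw [← lintegral_indicator_one measurableSet_Icc.compl]
  refine lintegral_mono fun x => ?_
  by_cases hx : x ∈ (Icc (-1 : ℝ) 1)ᶜ
  · have h1 : 1 ≤ x ^ 2 := by
      have : 1 < |x| := by
        by_contra h
        exact hx (abs_le.1 (not_lt.1 h))
      nlinarith [sq_abs x]
    simp [indicator_of_mem hx, min_eq_right h1]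
  · simp [indicator_of_notMem hx]

theorem setLIntegral_Icc_rpow_two_le_lintegral_min_sq :
    ∫⁻ x in Icc (-1 : ℝ) 1, ENNReal.ofReal (|x| ^ (2 : ℝ)) ∂Λ ≤
      ∫⁻ x, ENNReal.ofReal (min (x ^ 2) 1) ∂Λ := by
  refine (setLIntegral_mono' measurableSet_Icc fun x hx => ?_).trans
    (setLIntegral_le_lintegral _ _)
  have hx2 : x ^ 2 ≤ 1 := by nlinarith [hx.1, hx.2]
  rw [Real.rpow_two, sq_abs, min_eq_left hx2]

theorem lintegral_min_rpow_one_le (q : ℝ) :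
    ∫⁻ x, ENNReal.ofReal (min (|x| ^ q) 1) ∂Λ ≤
      ∫⁻ x in Icc (-1 : ℝ) 1, ENNReal.ofReal (|x| ^ q) ∂Λ + Λ (Icc (-1 : ℝ) 1)ᶜ := by
  rw [← lintegral_add_compl _ measurableSet_Icc, ← setLIntegral_one]
  gcongr with x
  · exact min_le_left _ _
  · exact ENNReal.ofReal_le_one.2 (min_le_right _ _)

theorem lintegral_min_sq_mul_le {k q : ℝ} (hk : 1 ≤ k) (hq0 : 0 < q) (hq2 : q ≤ 2) :
    ∫⁻ x, ENNReal.ofReal (min (k ^ 2 * x ^ 2) 1) ∂Λ ≤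
      ENNReal.ofReal (k ^ q) * ∫⁻ x, ENNReal.ofReal (min (|x| ^ q) 1) ∂Λ := by
  rw [← lintegral_const_mul' _ _ ENNReal.ofReal_ne_top]
  refine lintegral_mono fun x => ?_
  rw [← ENNReal.ofReal_mul (by positivity)]
  exact ENNReal.ofReal_le_ofReal (min_sq_mul_sq_one_le_rpow_mul_min x hk hq0 hq2)

theorem exists_rpow_lintegral_lt_top_of_bgIndex_lt
    (hΛ : ∫⁻ x, ENNReal.ofReal (min (x ^ 2) 1) ∂Λ < ⊤) {b : ℝ} (hb : bgIndex Λ < b) :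
    ∃ q, 0 < q ∧ q ≤ 2 ∧ q < b ∧
      ∫⁻ x in Icc (-1 : ℝ) 1, ENNReal.ofReal (|x| ^ q) ∂Λ < ⊤ := by
  have h2 : ∫⁻ x in Icc (-1 : ℝ) 1, ENNReal.ofReal (|x| ^ (2 : ℝ)) ∂Λ < ⊤ :=
    (setLIntegral_Icc_rpow_two_le_lintegral_min_sq Λ).trans_lt hΛ
  obtain ⟨r, ⟨hr0, hr⟩, hrb⟩ := exists_lt_of_csInf_lt (by exact ⟨2, two_pos, h2⟩) hb
  rcases le_total r 2 with hr2 | hr2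
  · exact ⟨r, hr0, hr2, hrb, hr⟩
  · exact ⟨2, two_pos, le_rfl, hr2.trans_lt hrb, h2⟩

end LevyMeasure

theorem nrlp_path_levy_measure_integrable_general
    (p : ℝ) (hp0 : 0 < p)
    (Λ : Measure ℝ)
    (hΛint : ∫⁻ x : ℝ, ENNReal.ofReal (min (x ^ 2) 1) ∂Λ < ⊤)
    (hBG : bgIndex Λ < 1 / p) :
    ∑' n : ℕ, ENNReal.ofReal (yuleSimonPMF p (n + 1)) *
      ∫⁻ x : ℝ, ENNReal.ofReal (min ((((n : ℝ) + 1) ^ 2 * x ^ 2)) 1) ∂Λ < ⊤ := by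
  obtain ⟨q, hq0, hq2, hqp, hq⟩ := exists_rpow_lintegral_lt_top_of_bgIndex_lt Λ hΛint hBG
  set I := ∫⁻ x, ENNReal.ofReal (min (|x| ^ q) 1) ∂Λ
  have hI : I < ⊤ := (lintegral_min_rpow_one_le Λ q).trans_lt <| ENNReal.add_lt_top.2
    ⟨hq, (measure_compl_Icc_le_lintegral_min_sq Λ).trans_lt hΛint⟩
  have hmoments : Summable fun n : ℕ => yuleSimonPMF p (n + 1) * ((n : ℝ) + 1) ^ q := by
    simpa using (summable_nat_add_iff 1).2 (summable_yuleSimonPMF_mul_rpow hp0 hqp)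
  calc ∑' n : ℕ, ENNReal.ofReal (yuleSimonPMF p (n + 1)) *
        ∫⁻ x : ℝ, ENNReal.ofReal (min ((((n : ℝ) + 1) ^ 2 * x ^ 2)) 1) ∂Λ
      ≤ ∑' n : ℕ, ENNReal.ofReal (yuleSimonPMF p (n + 1) * ((n : ℝ) + 1) ^ q) * I := by
        refine ENNReal.tsum_le_tsum fun n => ?_
        rw [ENNReal.ofReal_mul (yuleSimonPMF_nonneg hp0 _), mul_assoc]
        gcongr
        exact lintegral_min_sq_mul_le Λ (by simp) hq0 hq2
    _ = (∑' n : ℕ, ENNReal.ofReal (yuleSimonPMF p (n + 1) * ((n : ℝ) + 1) ^ q)) * I :=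
        ENNReal.tsum_mul_right
    _ < ⊤ := ENNReal.mul_lt_top hmoments.tsum_ofReal_lt_top hI

/-- Integrability half of Lemma 8.4 (ii): if `β(Λ) < 1/p` then
`∑_{k≥1} f_p(k) ∫ min(k²x², 1) Λ(dx) < ∞`, i.e. the image of `f_p ⊗ Λ` under
`(k,x) ↦ kx` is again a Lévy measure. -/
theorem nrlp_path_levy_measure_integrable
    (p : ℝ) (hp0 : 0 < p) (hp1 : p < 1)
    (Λ : Measure ℝ) (hΛ0 : Λ {0} = 0)
    (hΛint : ∫⁻ x : ℝ, ENNReal.ofReal (min (x ^ 2) 1) ∂Λ < ⊤)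
    (hBG : bgIndex Λ < 1 / p) :
    ∑' n : ℕ, ENNReal.ofReal (yuleSimonPMF p (n + 1)) *
      ∫⁻ x : ℝ, ENNReal.ofReal (min ((((n : ℝ) + 1) ^ 2 * x ^ 2)) 1) ∂Λ < ⊤ :=
  nrlp_path_levy_measure_integrable_general p hp0 Λ hΛint hBG
end

section
/- Let p ∈ (0,1) and let Λ be a Lévy measure on ℝ whose Blumenthal–Getoor index satisfies β(Λ) > 1/p. Then ∑_{k=1}^∞ p^{-1} B(k, 1/p + 1) ∫_ℝ min(k²x², 1) Λ(dx) = ∞. -/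
open MeasureTheory

/-!
Log-convexity of `Γ` gives `Γ(k + s) ≤ Γ(k) (k + s)^s`, hence the Yule–Simon weights satisfy
`f_p(k) ≥ c k^(-(q + 1))` with `q = 1/p`. For `0 < |x| ≤ 1` and `K = ⌈1/|x|⌉`, each of the `K`
indices `K ≤ n < 2K` has `min((n + 1)² x², 1) = 1` and weight at least `(2K)^(-(q + 1))`, so
`∑ₙ (n + 1)^(-(q + 1)) min((n + 1)² x², 1) ≥ c' |x|^q`. Integrating over `[-1, 1]`, the right-hand
side is infinite as soon as `q < β(Λ)`.
-/

open Set

theorem Real.Gamma_add_le_mul_rpow {x s : ℝ} (hx : 0 < x) (hs : 0 ≤ s) :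
    Gamma (x + s) ≤ Gamma x * (x + s) ^ s := by
  rcases hs.eq_or_lt with rfl | hs
  · simp
  have hxs : 0 < x + s := by linarith
  have hΓ : 0 < Gamma (x + s) := Gamma_pos_of_pos hxs
  have hslope := convexOn_log_Gamma.slope_mono_adjacent (mem_Ioi.2 hx)
    (mem_Ioi.2 (by linarith : (0:ℝ) < x + s + 1)) (lt_add_of_pos_right x hs) (lt_add_one (x + s))
  simp only [Function.comp_apply, Gamma_add_one hxs.ne', log_mul hxs.ne' hΓ.ne',
    add_sub_cancel_left, add_sub_cancel_right, div_one] at hslope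
  rw [div_le_iff₀ hs] at hslope
  rw [← log_le_log_iff hΓ (by positivity), log_mul (Gamma_pos_of_pos hx).ne' (by positivity),
    log_rpow hxs]
  linarith

theorem Real.rpow_neg_le_Gamma_div_Gamma_add {x s : ℝ} (hx : 1 ≤ x) (hs : 0 ≤ s) :
    ((s + 1) * x) ^ (-s) ≤ Gamma x / Gamma (x + s) := by
  have hΓ : 0 < Gamma x := Gamma_pos_of_pos (by linarith)
  have hle : Gamma (x + s) ≤ Gamma x * ((s + 1) * x) ^ s :=
    (Gamma_add_le_mul_rpow (by linarith) hs).trans <| by gcongr; nlinarith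
  calc ((s + 1) * x) ^ (-s) = Gamma x / (Gamma x * ((s + 1) * x) ^ s) := by
        rw [rpow_neg (by positivity), div_mul_eq_div_div, div_self hΓ.ne', one_div]
    _ ≤ Gamma x / Gamma (x + s) :=
        div_le_div_of_nonneg_left hΓ.le (Gamma_pos_of_pos (by linarith)) hle

lemma exists_pos_mul_rpow_le_yuleSimonPMF {p : ℝ} (hp : 0 < p) :
    ∃ c > 0, ∀ n : ℕ, c * ((n : ℝ) + 1) ^ (-(1 / p + 1)) ≤ yuleSimonPMF p (n + 1) := by
  set s := 1 / p + 1
  have hs : 0 ≤ s := by positivity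
  have hΓs : 0 < Real.Gamma s := Real.Gamma_pos_of_pos (by positivity)
  refine ⟨p⁻¹ * Real.Gamma s * (s + 1) ^ (-s), by positivity, fun n ↦ ?_⟩
  have hratio := Real.rpow_neg_le_Gamma_div_Gamma_add (x := (n : ℝ) + 1) (by simp) hs
  rw [Real.mul_rpow (by positivity) (by positivity)] at hratio
  calc p⁻¹ * Real.Gamma s * (s + 1) ^ (-s) * ((n : ℝ) + 1) ^ (-s)
      = p⁻¹ * Real.Gamma s * ((s + 1) ^ (-s) * ((n : ℝ) + 1) ^ (-s)) := by ring
    _ ≤ p⁻¹ * Real.Gamma s * (Real.Gamma ((n : ℝ) + 1) / Real.Gamma ((n : ℝ) + 1 + s)) := by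
        gcongr
    _ = yuleSimonPMF p (n + 1) := by
        simp only [yuleSimonPMF, s]; push_cast; ring_nf

lemma two_rpow_mul_rpow_le_mul_rpow {q a K : ℝ} (hq : 0 ≤ q) (ha : 0 < a) (hK : 0 < K)
    (hKa : K ≤ 2 / a) : 2 ^ (-(q + 1)) * (a / 2) ^ q ≤ K * (2 * K) ^ (-(q + 1)) := by
  have hpow : (a / 2) ^ q ≤ K ^ (-q) := by
    rw [Real.rpow_neg hK.le, ← Real.inv_rpow hK.le]
    gcongr
    rwa [le_inv_comm₀ (by positivity) hK, inv_div]
  calc 2 ^ (-(q + 1)) * (a / 2) ^ q ≤ 2 ^ (-(q + 1)) * K ^ (-q) := by gcongr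
    _ = K * (2 * K) ^ (-(q + 1)) := by
      rw [Real.mul_rpow zero_le_two hK.le, neg_add', Real.rpow_sub_one hK.ne']
      field_simp

lemma ofReal_le_tsum_rpow_mul_min_sq {q x : ℝ} (hq : 0 < q) (hx : |x| ≤ 1) :
    ENNReal.ofReal (2 ^ (-(q + 1)) * (|x| / 2) ^ q) ≤
      ∑' n : ℕ, ENNReal.ofReal (((n : ℝ) + 1) ^ (-(q + 1))) *
        ENNReal.ofReal (min (((n : ℝ) + 1) ^ 2 * x ^ 2) 1) := by
  rcases eq_or_ne x 0 with rfl | hx0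
  · simp [Real.zero_rpow hq.ne']
  have hax : 0 < |x| := abs_pos.2 hx0
  set K := ⌈|x|⁻¹⌉₊
  have hK1 : |x|⁻¹ ≤ K := Nat.le_ceil _
  have hKpos : (0 : ℝ) < K := (inv_pos.2 hax).trans_le hK1
  have hK2 : (K : ℝ) ≤ 2 / |x| := by
    have h1 : 1 ≤ |x|⁻¹ := one_le_inv₀ hax |>.2 hx
    have h2 := Nat.ceil_lt_add_one (inv_nonneg.2 hax.le)
    rw [div_eq_mul_inv]; linarith
  have hterm : ∀ n ∈ Finset.Ico K (2 * K), ENNReal.ofReal ((2 * K : ℝ) ^ (-(q + 1))) ≤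
      ENNReal.ofReal (((n : ℝ) + 1) ^ (-(q + 1))) *
        ENNReal.ofReal (min (((n : ℝ) + 1) ^ 2 * x ^ 2) 1) := by
    intro n hn
    rw [Finset.mem_Ico] at hn
    have hKn : (K : ℝ) ≤ n := by exact_mod_cast hn.1
    have hn2 : (n : ℝ) + 1 ≤ 2 * K := by exact_mod_cast hn.2
    have hmin : min (((n : ℝ) + 1) ^ 2 * x ^ 2) 1 = 1 := by
      refine min_eq_right ?_
      have : 1 ≤ ((n : ℝ) + 1) * |x| := by
        rw [← inv_le_iff_one_le_mul₀ hax]; linarith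
      rw [← sq_abs x, ← mul_pow]; nlinarith
    rw [hmin, ENNReal.ofReal_one, mul_one]
    exact ENNReal.ofReal_le_ofReal (Real.rpow_le_rpow_of_nonpos (by positivity) hn2 (by linarith))
  have hreal := two_rpow_mul_rpow_le_mul_rpow hq.le hax hKpos hK2
  calc ENNReal.ofReal (2 ^ (-(q + 1)) * (|x| / 2) ^ q)
      ≤ ENNReal.ofReal (K * (2 * K : ℝ) ^ (-(q + 1))) := ENNReal.ofReal_le_ofReal hreal
    _ = ∑ n ∈ Finset.Ico K (2 * K), ENNReal.ofReal ((2 * K : ℝ) ^ (-(q + 1))) := by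
        rw [Finset.sum_const, Nat.card_Ico, show 2 * K - K = K by omega, nsmul_eq_mul,
          ENNReal.ofReal_mul (Nat.cast_nonneg K), ENNReal.ofReal_natCast]
    _ ≤ _ := Finset.sum_le_sum hterm
    _ ≤ _ := ENNReal.sum_le_tsum _

lemma lintegral_Icc_abs_rpow_eq_top_of_lt_bgIndex {Λ : Measure ℝ} {r : ℝ} (hr : 0 < r)
    (h : r < bgIndex Λ) : ∫⁻ x in Icc (-1 : ℝ) 1, ENNReal.ofReal (|x| ^ r) ∂Λ = ⊤ := by
  by_contra hfin
  exact h.not_ge (csInf_le ⟨0, fun _ hr ↦ hr.1.le⟩ ⟨hr, lt_top_iff_ne_top.2 hfin⟩)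

lemma tsum_rpow_mul_lintegral_min_sq_eq_top {μ : Measure ℝ} {q : ℝ} (hq : 0 < q)
    (h : ∫⁻ x in Icc (-1 : ℝ) 1, ENNReal.ofReal (|x| ^ q) ∂μ = ⊤) :
    ∑' n : ℕ, ENNReal.ofReal (((n : ℝ) + 1) ^ (-(q + 1))) *
      ∫⁻ x, ENNReal.ofReal (min (((n : ℝ) + 1) ^ 2 * x ^ 2) 1) ∂μ = ⊤ := by
  have hmeas (n : ℕ) :
      Measurable fun x : ℝ ↦ ENNReal.ofReal (min (((n : ℝ) + 1) ^ 2 * x ^ 2) 1) := by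
    fun_prop
  refine top_le_iff.1 ?_
  calc ⊤ = ENNReal.ofReal (2 ^ (-(q + 1)) / 2 ^ q) *
        ∫⁻ x in Icc (-1 : ℝ) 1, ENNReal.ofReal (|x| ^ q) ∂μ := by
        rw [h, ENNReal.mul_top (ENNReal.ofReal_pos.2 (by positivity)).ne']
    _ = ∫⁻ x in Icc (-1 : ℝ) 1, ENNReal.ofReal (2 ^ (-(q + 1)) * (|x| / 2) ^ q) ∂μ := by
        rw [← lintegral_const_mul _ (by fun_prop)]
        congr 1 with x
        rw [← ENNReal.ofReal_mul (by positivity), Real.div_rpow (abs_nonneg x) zero_le_two]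
        ring_nf
    _ ≤ ∫⁻ x in Icc (-1 : ℝ) 1, ∑' n : ℕ, ENNReal.ofReal (((n : ℝ) + 1) ^ (-(q + 1))) *
          ENNReal.ofReal (min (((n : ℝ) + 1) ^ 2 * x ^ 2) 1) ∂μ :=
        setLIntegral_mono' measurableSet_Icc fun x hx ↦
          ofReal_le_tsum_rpow_mul_min_sq hq (abs_le.2 hx)
    _ ≤ ∫⁻ x, ∑' n : ℕ, ENNReal.ofReal (((n : ℝ) + 1) ^ (-(q + 1))) *
          ENNReal.ofReal (min (((n : ℝ) + 1) ^ 2 * x ^ 2) 1) ∂μ :=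
        setLIntegral_le_lintegral _ _
    _ = _ := by
        rw [lintegral_tsum fun n ↦ ((hmeas n).const_mul _).aemeasurable]
        simp_rw [lintegral_const_mul _ (hmeas _)]

theorem nrlp_path_levy_measure_diverges_general
    (p : ℝ) (hp0 : 0 < p)
    (Λ : Measure ℝ)
    (hBG : 1 / p < bgIndex Λ) :
    ∑' n : ℕ, ENNReal.ofReal (yuleSimonPMF p (n + 1)) *
      ∫⁻ x : ℝ, ENNReal.ofReal (min ((((n : ℝ) + 1) ^ 2 * x ^ 2)) 1) ∂Λ = ⊤ := by
  obtain ⟨c, hc, hf⟩ := exists_pos_mul_rpow_le_yuleSimonPMF hp0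
  have hpow := tsum_rpow_mul_lintegral_min_sq_eq_top (by positivity)
    (lintegral_Icc_abs_rpow_eq_top_of_lt_bgIndex (by positivity) hBG)
  refine top_le_iff.1 ?_
  calc ⊤ = ENNReal.ofReal c * ⊤ := (ENNReal.mul_top (by simpa using hc)).symm
    _ = ∑' n : ℕ, ENNReal.ofReal c * (ENNReal.ofReal (((n : ℝ) + 1) ^ (-(1 / p + 1))) *
          ∫⁻ x, ENNReal.ofReal (min (((n : ℝ) + 1) ^ 2 * x ^ 2) 1) ∂Λ) := by
        rw [ENNReal.tsum_mul_left, hpow]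
    _ ≤ _ := ENNReal.tsum_le_tsum fun n ↦ by
        rw [← mul_assoc, ← ENNReal.ofReal_mul hc.le]
        gcongr
        exact hf n

/-- Divergence half of Lemma 8.4 (ii): if `β(Λ) > 1/p` then
`∑_{k≥1} f_p(k) ∫ min(k²x², 1) Λ(dx) = ∞`. -/
theorem nrlp_path_levy_measure_diverges
    (p : ℝ) (hp0 : 0 < p) (hp1 : p < 1)
    (Λ : Measure ℝ) (hΛ0 : Λ {0} = 0)
    (hΛint : ∫⁻ x : ℝ, ENNReal.ofReal (min (x ^ 2) 1) ∂Λ < ⊤)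
    (hBG : 1 / p < bgIndex Λ) :
    ∑' n : ℕ, ENNReal.ofReal (yuleSimonPMF p (n + 1)) *
      ∫⁻ x : ℝ, ENNReal.ofReal (min ((((n : ℝ) + 1) ^ 2 * x ^ 2)) 1) ∂Λ = ⊤ :=
  nrlp_path_levy_measure_diverges_general p hp0 Λ hBG
end

section
/- Let p ∈ (0,1/2) and set a_n := Γ(n)/Γ(n+p) for n ≥ 1. Then lim_{n→∞} n^{2p−1} ∑_{k=1}^n a_k² = 1/(1−2p). -/
/-!
Log-convexity of `Γ` gives Gautschi's inequality `Γ(x + p) ≤ Γ(x) x^p` for `0 < p < 1`. Applied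
at `x`, and at `x + p` with exponent `1 - p`, it squeezes `Γ(x) / Γ(x + p)` between `x^(-p)` and
`x^(-p) (1 + p / x)^(1 - p)`, so `aₖ² ~ k^(-2p)`. As `∑ k^(-2p)` diverges, the equivalence
passes to the partial sums, and comparing with `∫₁ⁿ x^(-2p) dx` gives
`∑_{k ≤ n} k^(-2p) ~ n^(1-2p) / (1-2p)`.
-/

open Filter Real Finset Asymptotics Topology

namespace Real

theorem Gamma_add_le_Gamma_mul_rpow {x p : ℝ} (hx : 0 < x) (hp0 : 0 < p) (hp1 : p < 1) :
    Gamma (x + p) ≤ Gamma x * x ^ p := by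
  have hconv := Gamma_mul_add_mul_le_rpow_Gamma_mul_rpow_Gamma hx (by linarith : 0 < x + 1)
    (by linarith : 0 < 1 - p) hp0 (by ring)
  rw [show (1 - p) * x + p * (x + 1) = x + p by ring, Gamma_add_one hx.ne',
    mul_rpow hx.le (Gamma_pos_of_pos hx).le] at hconv
  calc Gamma (x + p) ≤ Gamma x ^ (1 - p) * (x ^ p * Gamma x ^ p) := hconv
    _ = Gamma x ^ (1 - p + p) * x ^ p := by rw [rpow_add (Gamma_pos_of_pos hx)]; ring
    _ = Gamma x * x ^ p := by norm_num

theorem tendsto_Gamma_add_div_Gamma_mul_rpow {p : ℝ} (hp0 : 0 < p) (hp1 : p < 1) :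
    Tendsto (fun x => Gamma (x + p) / (Gamma x * x ^ p)) atTop (𝓝 1) := by
  have hupper : ∀ᶠ x in atTop, Gamma (x + p) / (Gamma x * x ^ p) ≤ 1 :=
    (eventually_gt_atTop 0).mono fun x hx => (div_le_one (by positivity)).2
      (Gamma_add_le_Gamma_mul_rpow hx hp0 hp1)
  have hlower :
      ∀ᶠ x in atTop, (x / (x + p)) ^ (1 - p) ≤ Gamma (x + p) / (Gamma x * x ^ p) := by
    filter_upwards [eventually_gt_atTop 0] with x hx
    have hxp : 0 < x + p := by linarith
    have h := Gamma_add_le_Gamma_mul_rpow hxp (by linarith : 0 < 1 - p) (by linarith)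
    rw [show x + p + (1 - p) = x + 1 by ring, Gamma_add_one hx.ne'] at h
    have hΓ := Gamma_pos_of_pos hx
    rw [div_rpow hx.le hxp.le, div_le_div_iff₀ (by positivity) (by positivity)]
    have hxx : x ^ (1 - p) * x ^ p = x := by rw [← rpow_add hx]; norm_num
    calc x ^ (1 - p) * (Gamma x * x ^ p) = x * Gamma x := by linear_combination Gamma x * hxx
      _ ≤ Gamma (x + p) * (x + p) ^ (1 - p) := h
  have hlim : Tendsto (fun x => (x / (x + p)) ^ (1 - p)) atTop (𝓝 1) := by
    have h : Tendsto (fun x => 1 - p / (x + p)) atTop (𝓝 1) := by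
      simpa using tendsto_const_nhds.sub
        (tendsto_const_nhds.div_atTop (tendsto_atTop_add_const_right _ p tendsto_id))
    simpa using (h.rpow_const (p := 1 - p) (Or.inl one_ne_zero)).congr' <|
      (eventually_gt_atTop 0).mono fun x hx => by
        rw [one_sub_div (by linarith), add_sub_cancel_right]
  exact tendsto_of_tendsto_of_tendsto_of_le_of_le' hlim tendsto_const_nhds hlower hupper

theorem isEquivalent_Gamma_div_Gamma_add {p : ℝ} (hp0 : 0 < p) (hp1 : p < 1) :
    (fun x => Gamma x / Gamma (x + p)) ~[atTop] fun x => x ^ (-p) := by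
  refine (isEquivalent_of_tendsto_one ?_).symm
  refine (tendsto_Gamma_add_div_Gamma_mul_rpow hp0 hp1).congr' ?_
  filter_upwards [eventually_gt_atTop 0] with x hx
  rw [Pi.div_apply, rpow_neg hx.le]
  field_simp

end Real

theorem Asymptotics.IsEquivalent.sum_range {u v : ℕ → ℝ} (huv : u ~[atTop] v) (hv : 0 ≤ v)
    (hv_sum : Tendsto (fun n => ∑ i ∈ range n, v i) atTop atTop) :
    (fun n => ∑ i ∈ range n, u i) ~[atTop] fun n => ∑ i ∈ range n, v i := by
  simpa only [IsEquivalent, Pi.sub_def, ← sum_sub_distrib]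
    using IsLittleO.sum_range (f := u - v) huv hv hv_sum

section RpowSum

variable {s : ℝ}

theorem integral_one_rpow_neg (hs : s < 1) (b : ℝ) :
    ∫ x in (1 : ℝ)..b, x ^ (-s) = (b ^ (1 - s) - 1) / (1 - s) := by
  rw [integral_rpow (Or.inl (by linarith)), neg_add_eq_sub, one_rpow]

theorem antitoneOn_rpow_neg_Ici (hs : 0 ≤ s) : AntitoneOn (fun x : ℝ => x ^ (-s)) (Set.Ici 1) :=
  (antitoneOn_rpow_Ioi_of_exponent_nonpos (by linarith)).mono
    fun _ hx => Set.mem_Ioi.2 (lt_of_lt_of_le one_pos hx)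

theorem sum_range_rpow_neg_le (hs0 : 0 ≤ s) (hs1 : s < 1) (n : ℕ) :
    ∑ i ∈ range n, ((i : ℝ) + 1) ^ (-s) ≤ (n : ℝ) ^ (1 - s) / (1 - s) := by
  cases n with
  | zero => simp [zero_rpow (by linarith : (1 - s) ≠ 0)]
  | succ m =>
    have hcmp := AntitoneOn.sum_le_integral (x₀ := 1) (a := m)
      ((antitoneOn_rpow_neg_Ici hs0).mono Set.Icc_subset_Ici_self)
    rw [integral_one_rpow_neg hs1] at hcmp
    have hs : 1 ≤ 1 / (1 - s) := by rw [le_div_iff₀ (by linarith)]; linarith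
    rw [sum_range_succ', Nat.cast_zero, zero_add, one_rpow]
    push_cast [add_comm (1 : ℝ), sub_div] at hcmp ⊢
    linarith

theorem le_sum_range_rpow_neg (hs0 : 0 ≤ s) (hs1 : s < 1) (n : ℕ) :
    ((n : ℝ) ^ (1 - s) - 1) / (1 - s) ≤ ∑ i ∈ range n, ((i : ℝ) + 1) ^ (-s) := by
  have hcmp := AntitoneOn.integral_le_sum (x₀ := 1) (a := n)
      ((antitoneOn_rpow_neg_Ici hs0).mono Set.Icc_subset_Ici_self)
  rw [integral_one_rpow_neg hs1] at hcmp
  calc ((n : ℝ) ^ (1 - s) - 1) / (1 - s) ≤ ((1 + n) ^ (1 - s) - 1) / (1 - s) := by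
        gcongr
        linarith
    _ ≤ ∑ i ∈ range n, ((i : ℝ) + 1) ^ (-s) := by simpa only [add_comm (1 : ℝ)] using hcmp

theorem tendsto_natCast_rpow_div_atTop (hs : s < 1) :
    Tendsto (fun n : ℕ => (n : ℝ) ^ (1 - s) / (1 - s)) atTop atTop :=
  ((tendsto_rpow_atTop (by linarith)).comp tendsto_natCast_atTop_atTop).atTop_div_const
    (by linarith)

theorem isEquivalent_sum_range_rpow_neg (hs0 : 0 ≤ s) (hs1 : s < 1) :
    (fun n : ℕ => ∑ i ∈ range n, ((i : ℝ) + 1) ^ (-s)) ~[atTop]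
      fun n => (n : ℝ) ^ (1 - s) / (1 - s) := by
  have hs : 0 < 1 - s := by linarith
  have hbounded :
      (fun n : ℕ => ∑ i ∈ range n, ((i : ℝ) + 1) ^ (-s) - (n : ℝ) ^ (1 - s) / (1 - s))
        =O[atTop] fun _ => (1 : ℝ) := by
    refine isBigO_of_le' (c := 1 / (1 - s)) _ fun n => ?_
    rw [norm_one, mul_one, Real.norm_eq_abs, abs_le]
    have := le_sum_range_rpow_neg hs0 hs1 n
    have := sum_range_rpow_neg_le hs0 hs1 n
    rw [sub_div] at *
    constructor <;> linarith [one_div_pos.2 hs]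
  exact hbounded.trans_isLittleO <| (isLittleO_one_left_iff ℝ).2 <|
    tendsto_norm_atTop_atTop.comp (tendsto_natCast_rpow_div_atTop hs1)

end RpowSum

/-- Bercu's asymptotic: for `p ∈ (0, 1/2)` and `aₙ = Γ(n)/Γ(n+p)`,
`n^{2p-1} ∑_{k=1}^n aₖ² → 1/(1-2p)` as `n → ∞`. Here `n^{2p-1}` is a real power. -/
theorem bercu_sum_asymptotic (p : ℝ) (hp0 : 0 < p) (hp2 : p < 1 / 2) :
    Filter.Tendsto
      (fun n : ℕ => (n : ℝ) ^ (2 * p - 1) *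
        ∑ k ∈ Finset.Icc 1 n, (Real.Gamma k / Real.Gamma ((k : ℝ) + p)) ^ 2)
      Filter.atTop (nhds (1 / (1 - 2 * p))) := by
  have hs0 : 0 ≤ 2 * p := by linarith
  have hs1 : 2 * p < 1 := by linarith
  have hterm : (fun k : ℕ => (Gamma (k + 1 : ℕ) / Gamma (((k + 1 : ℕ) : ℝ) + p)) ^ 2)
      ~[atTop] fun k : ℕ => ((k : ℝ) + 1) ^ (-(2 * p)) := by
    refine (((isEquivalent_Gamma_div_Gamma_add hp0 (by linarith)).comp_tendsto
      (tendsto_natCast_atTop_atTop.comp (tendsto_add_atTop_nat 1))).pow 2).congr_right ?_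
    refine Eventually.of_forall fun k => ?_
    simp only [Function.comp_apply, Pi.pow_apply, Nat.cast_succ]
    rw [← rpow_natCast, ← rpow_mul (by positivity)]
    ring_nf
  have hpowers := isEquivalent_sum_range_rpow_neg hs0 hs1
  have hsums := (hterm.sum_range (fun k => by positivity)
    (hpowers.symm.tendsto_atTop (tendsto_natCast_rpow_div_atTop hs1))).trans hpowers
  have hscaled := (IsEquivalent.refl (u := fun n : ℕ => (n : ℝ) ^ (2 * p - 1))).mul hsums
  refine (hscaled.symm.tendsto_nhds ?_).congr fun n => ?_
  · refine tendsto_const_nhds.congr' <| (eventually_gt_atTop 0).mono fun n hn => ?_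
    have hn : (0 : ℝ) < n := by exact_mod_cast hn
    rw [Pi.mul_apply, mul_div_assoc', ← rpow_add hn]
    norm_num
  · rw [Pi.mul_apply, range_eq_Ico, sum_Ico_add' (fun k : ℕ => (Gamma k / Gamma (k + p)) ^ 2)]
    rw [zero_add, Ico_add_one_right_eq_Icc]
end
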